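/- arXiv:2604.16255 — 4 statements merged into one kernel-verified Lean document; each statement's English description precedes it below -/
import Mathlib

section
/- The number of eventually constant k-tuples on X_1,…,X_k equals (∏_{i=1}^k n_i^{n_{i-1}-1}) · (∏_{j=1}^k n_j − ∏_{j=1}^k (n_j − 1)), indices modulo k (so n_0 = n_k). -/
universe u

open Fin.NatCast Fin.CommRing

variable {k : ℕ} {X : Fin (k + 1) → Type u}

/-- The endomorphism of the disjoint union `Σ i, X i` induced by a cyclic tuple of
functions `f i : X i → X (i + 1)` (indices modulo the number of sets). -/
def step (f : ∀ i : Fin (k + 1), X i → X (i + 1)) : (Σ i, X i) → (Σ i, X i) :=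
  fun p => ⟨p.1 + 1, f p.1 p.2⟩

lemma step_iterate_fst (f : ∀ i : Fin (k + 1), X i → X (i + 1)) (p : Σ i, X i) (m : ℕ) :
    ((step f)^[m] p).1 = p.1 + (m : Fin (k + 1)) := by
  induction m with
  | zero => simp
  | succ m ih =>
    rw [Function.iterate_succ_apply']
    show ((step f)^[m] p).1 + 1 = _
    rw [ih]; push_cast; ring

/-- The composite `f k ∘ ⋯ ∘ f 0 : X 0 → X 0` of a cyclic tuple of functions. -/
def comp (f : ∀ i : Fin (k + 1), X i → X (i + 1)) (v : X 0) : X 0 :=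
  have h : ((step f)^[k + 1] (⟨0, v⟩ : Σ i, X i)).1 = 0 := by
    rw [step_iterate_fst]; simp
  h ▸ ((step f)^[k + 1] (⟨0, v⟩ : Σ i, X i)).2

/-- A cyclic tuple of functions is eventually constant if some iterate of its
composite `X 0 → X 0` is a constant map. -/
def EventuallyConstant (f : ∀ i : Fin (k + 1), X i → X (i + 1)) : Prop :=
  ∃ (m : ℕ) (c : X 0), ∀ v : X 0, (comp f)^[m] v = c


namespace ECaux
set_option linter.unusedSectionVars false
open Finset

open Finset

lemma choose_mul_sub (n i : ℕ) (hi : i < n) : (n - i) * n.choose i = n * (n-1).choose i := by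
  obtain ⟨m, rfl⟩ := Nat.exists_eq_add_of_lt hi  -- n = i + m + 1
  have h1 := Nat.choose_succ_right_eq (i + m + 1) i
  have h2 := Nat.add_one_mul_choose_eq (i + m) i
  have h3 : i + m + 1 - i = m + 1 := by omega
  have h4 : i + m + 1 - 1 = i + m := by omega
  rw [h3, h4, h2, h1, h3]
  ring

/-- `∑_{S ⊆ α} x^{|S|} y^{n-|S|} = (x+y)^n`. -/
lemma sum_subsets_pow {α : Type*} [Fintype α] [DecidableEq α] (x y : ℤ) :
    ∑ S : Finset α, x ^ S.card * y ^ (Fintype.card α - S.card) = (x + y) ^ Fintype.card α := by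
  classical
  have h0 : (univ : Finset (Finset α)) = (univ : Finset α).powerset := by
    simp [Finset.powerset_univ]
  rw [h0, Finset.sum_powerset, add_pow]
  rw [Finset.card_univ]
  refine Finset.sum_congr rfl fun i hi => ?_
  rw [Finset.sum_congr rfl (g := fun _ => x ^ i * y ^ (Fintype.card α - i))
      (fun S hS => by rw [(Finset.mem_powersetCard.1 hS).2]),
    Finset.sum_const, Finset.card_powersetCard, Finset.card_univ, nsmul_eq_mul]
  ring

/-- `∑_{S ⊆ α} x^{|S|} (n-|S|) y^{n-|S|-1} = n (x+y)^{n-1}`. -/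
lemma sum_subsets_pow' {α : Type*} [Fintype α] [DecidableEq α] (x y : ℤ) :
    ∑ S : Finset α, x ^ S.card * (((Fintype.card α - S.card : ℕ) : ℤ)
        * y ^ (Fintype.card α - S.card - 1)) =
      (Fintype.card α : ℤ) * (x + y) ^ (Fintype.card α - 1) := by
  classical
  set n := Fintype.card α with hn
  have h0 : (univ : Finset (Finset α)) = (univ : Finset α).powerset := by
    simp [Finset.powerset_univ]
  rw [h0, Finset.sum_powerset, Finset.card_univ, ← hn]
  have hstep : ∀ i ∈ Finset.range (n+1),
      (∑ S ∈ Finset.powersetCard i (univ : Finset α),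
        x ^ S.card * (((n - S.card : ℕ) : ℤ) * y ^ (n - S.card - 1)))
      = (n.choose i : ℤ) * (x ^ i * (((n - i : ℕ) : ℤ) * y ^ (n - i - 1))) := by
    intro i hi
    rw [Finset.sum_congr rfl (g := fun _ => x ^ i * (((n - i:ℕ):ℤ) * y ^ (n - i - 1)))
      (fun S hS => by rw [(Finset.mem_powersetCard.1 hS).2]),
      Finset.sum_const, Finset.card_powersetCard, Finset.card_univ, ← hn, nsmul_eq_mul]
  rw [Finset.sum_congr rfl hstep]
  rcases Nat.eq_zero_or_pos n with h | h
  · rw [h]; simp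
  · rw [Finset.sum_range_succ]
    simp only [Nat.sub_self, Nat.cast_zero, zero_mul, mul_zero, add_zero]
    have hrw : ∀ i ∈ Finset.range n,
        (n.choose i : ℤ) * (x ^ i * (((n - i : ℕ):ℤ) * y ^ (n - i - 1)))
        = (n:ℤ) * (((n-1).choose i : ℤ) * (x ^ i * y ^ ((n-1) - i))) := by
      intro i hi
      have hi' : i < n := Finset.mem_range.1 hi
      have := choose_mul_sub n i hi'
      have hcast : ((n - i : ℕ):ℤ) * (n.choose i : ℤ) = (n:ℤ) * ((n-1).choose i : ℤ) := by
        exact_mod_cast congrArg (Nat.cast : ℕ → ℤ) this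
      have he : n - i - 1 = (n-1) - i := by omega
      rw [he]
      linear_combination (x ^ i * y ^ (n - 1 - i)) * hcast
    rw [Finset.sum_congr rfl hrw, ← Finset.mul_sum]
    congr 1
    have := add_pow x y (n-1)
    have hr : n - 1 + 1 = n := by omega
    rw [hr] at this
    rw [this]
    refine Finset.sum_congr rfl fun i hi => ?_
    ring


open Finset

variable {k : ℕ}

lemma prod_shift (f : Fin (k+1) → ℤ) : ∏ j, f (j+1) = ∏ j, f j :=
  Equiv.prod_comp (Equiv.addRight 1) f

lemma exists_transition (m : Fin (k+1) → ℕ) (h0 : ∃ j, m j = 0) (h1 : ∃ j, m j ≠ 0) :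
    ∃ i, m i ≠ 0 ∧ m (i+1) = 0 := by
  obtain ⟨j0, hj0⟩ := h0
  obtain ⟨j1, hj1⟩ := h1
  have hP : ∃ t : ℕ, m (j1 + (t : Fin (k+1))) = 0 := by
    refine ⟨(j0 - j1).val, ?_⟩
    rw [Fin.cast_val_eq_self]
    simp [hj0]
  classical
  let t0 := Nat.find hP
  have ht0 : m (j1 + (t0 : Fin (k+1))) = 0 := Nat.find_spec hP
  have ht0pos : 0 < t0 := by
    rcases Nat.eq_zero_or_pos t0 with h | h
    · exfalso; apply hj1
      have := ht0
      rw [h] at this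
      simpa using this
    · exact h
  have hmin : m (j1 + ((t0 - 1 : ℕ) : Fin (k+1))) ≠ 0 := Nat.find_min hP (by omega)
  refine ⟨j1 + ((t0 - 1 : ℕ) : Fin (k+1)), hmin, ?_⟩
  have : ((t0 - 1 : ℕ) : Fin (k+1)) + 1 = (t0 : Fin (k+1)) := by
    have : ((t0 - 1 : ℕ) : Fin (k+1)) + ((1:ℕ) : Fin (k+1)) = ((t0 - 1 + 1 : ℕ) : Fin (k+1)) := by
      push_cast; ring
    rw [show ((1:ℕ) : Fin (k+1)) = 1 by simp] at this
    rw [this, Nat.sub_add_cancel ht0pos]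
  rw [add_assoc, this]
  exact ht0

/-- the `B = ⊥` vanishing: `∏ m_{j+1}^{m_j} = ∏ m_j * m_{j+1}^{m_j - 1}` when not all `m_j = 0`. -/
lemma G_zero (m : Fin (k+1) → ℕ) (h1 : ∃ j, m j ≠ 0) :
    ∏ j, ((m (j+1) : ℤ)) ^ (m j) = ∏ j, (m j : ℤ) * (m (j+1) : ℤ) ^ (m j - 1) := by
  by_cases h0 : ∃ j, m j = 0
  · obtain ⟨i, hi, hi1⟩ := exists_transition m h0 h1
    rw [Finset.prod_eq_zero (Finset.mem_univ i), Finset.prod_eq_zero (Finset.mem_univ (i+1))]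
    · rw [hi1]; simp
    · rw [hi1]
      exact zero_pow hi
  · push_neg at h0
    rw [Finset.prod_mul_distrib, show (∏ j, (m j : ℤ)) = ∏ j, (m (j+1) : ℤ) from
      (prod_shift (fun j => (m j : ℤ))).symm, ← Finset.prod_mul_distrib]
    refine Finset.prod_congr rfl fun j _ => ?_
    rw [← pow_succ', Nat.sub_add_cancel (Nat.one_le_iff_ne_zero.2 (h0 j))]



/-- a cyclic tuple of functions into "vertices ⊕ roots" -/
abbrev Tup (V R : Fin (k+1) → Type u) := ∀ j : Fin (k+1), V j → (V (j+1) ⊕ R (j+1))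

variable {V R : Fin (k+1) → Type u}

/-- the step map on the disjoint union, roots absorbing -/
def stepW (g : Tup V R) : ((Σ j, V j) ⊕ (Σ j, R j)) → ((Σ j, V j) ⊕ (Σ j, R j))
  | .inr r => .inr r
  | .inl p => (g p.1 p.2).elim (fun w => .inl ⟨p.1+1, w⟩) (fun r => .inr ⟨p.1+1, r⟩)

/-- the orbit of `p` is eventually absorbed in the roots -/
def Absorbed (g : Tup V R) (p : Σ j, V j) : Prop :=
  ∃ (t : ℕ) (r : Σ j, R j), (stepW g)^[t] (.inl p) = .inr r

def Absorbing (g : Tup V R) : Prop := ∀ p : Σ j, V j, Absorbed g p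

lemma stepW_inl_inl {g : Tup V R} {j : Fin (k+1)} {v : V j} {w : V (j+1)}
    (h : g j v = .inl w) : stepW g (.inl ⟨j, v⟩) = .inl ⟨j+1, w⟩ := by
  simp [stepW, h]

lemma stepW_inl_inr {g : Tup V R} {j : Fin (k+1)} {v : V j} {r : R (j+1)}
    (h : g j v = .inr r) : stepW g (.inl ⟨j, v⟩) = .inr ⟨j+1, r⟩ := by
  simp [stepW, h]

lemma absorbed_of_inr {g : Tup V R} {j : Fin (k+1)} {v : V j} {r : R (j+1)}
    (h : g j v = .inr r) : Absorbed g ⟨j, v⟩ :=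
  ⟨1, ⟨j+1, r⟩, by simp [stepW_inl_inr h]⟩

lemma absorbed_of_step {g : Tup V R} {j : Fin (k+1)} {v : V j} {w : V (j+1)}
    (h : g j v = .inl w) (hw : Absorbed g ⟨j+1, w⟩) : Absorbed g ⟨j, v⟩ := by
  obtain ⟨t, r, ht⟩ := hw
  exact ⟨t+1, r, by rw [Function.iterate_succ_apply, stepW_inl_inl h]; exact ht⟩

lemma not_absorbing_of_no_roots [∀ j, IsEmpty (R j)] (hne : Nonempty (Σ j, V j))
    (g : Tup V R) : ¬ Absorbing g := by
  intro h
  obtain ⟨p⟩ := hne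
  obtain ⟨t, r, _⟩ := h p
  exact (IsEmpty.false r.2)

section Pat

variable [∀ j, DecidableEq (V j)] [∀ j, Fintype (V j)]

/-- the pattern of a tuple: which vertices map directly to roots -/
def Pat (g : Tup V R) : ∀ j, Finset (V j) :=
  fun j => univ.filter (fun v => (g j v).isRight)

lemma mem_Pat {g : Tup V R} {j : Fin (k+1)} {v : V j} :
    v ∈ Pat g j ↔ (g j v).isRight := by simp [Pat]

variable (B : ∀ j, Finset (V j))

/-- reduced vertex sets -/
abbrev Vr : Fin (k+1) → Type u := fun j => {v : V j // v ∉ B j}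
/-- reduced root sets -/
abbrev Rr : Fin (k+1) → Type u := fun j => {v : V j // v ∈ B j}

variable {B}

/-- reassemble a tuple from its pattern data -/
def mk (ρ : ∀ j, Rr B j → R (j+1)) (h : Tup (Vr B) (Rr B)) : Tup V R :=
  fun j v => if hv : v ∈ B j then .inr (ρ j ⟨v, hv⟩)
    else .inl ((h j ⟨v, hv⟩).elim Subtype.val Subtype.val)

lemma pat_mk (ρ : ∀ j, Rr B j → R (j+1)) (h : Tup (Vr B) (Rr B)) : Pat (mk ρ h) = B := by
  funext j
  ext v
  by_cases hv : v ∈ B j <;> simp [mem_Pat, mk, hv]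

lemma mk_apply_not_mem (ρ : ∀ j, Rr B j → R (j+1)) (h : Tup (Vr B) (Rr B))
    {j : Fin (k+1)} (v : Vr B j) :
    mk ρ h j v.1 = .inl ((h j v).elim Subtype.val Subtype.val) := by
  rw [mk, dif_neg v.2]

lemma absorbing_mk (ρ : ∀ j, Rr B j → R (j+1)) {h : Tup (Vr B) (Rr B)}
    (hh : Absorbing h) : Absorbing (mk ρ h) := by
  have key : ∀ t (j : Fin (k+1)) (v : Vr B j) (r : Σ j, Rr B j),
      (stepW h)^[t] (.inl ⟨j, v⟩) = .inr r → Absorbed (mk ρ h) ⟨j, v.1⟩ := by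
    intro t
    induction t with
    | zero => intro j v r hr; simp at hr
    | succ t ih =>
      intro j v r hr
      rw [Function.iterate_succ_apply] at hr
      rcases hw : h j v with w | w
      · rw [stepW_inl_inl hw] at hr
        have habs := ih (j+1) w r hr
        exact absorbed_of_step (by rw [mk_apply_not_mem, hw]; rfl) habs
      · -- absorbed in two steps
        have h1 : mk ρ h j v.1 = .inl w.1 := by rw [mk_apply_not_mem, hw]; rfl
        have h2 : mk ρ h (j+1) w.1 = .inr (ρ (j+1) ⟨w.1, w.2⟩) := by
          rw [mk, dif_pos w.2]
        exact absorbed_of_step h1 (absorbed_of_inr h2)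
  intro ⟨j, v⟩
  by_cases hv : v ∈ B j
  · exact absorbed_of_inr (by rw [mk, dif_pos hv])
  · obtain ⟨t, r, hr⟩ := hh ⟨j, ⟨v, hv⟩⟩
    exact key t j ⟨v, hv⟩ r hr

/-- extract root assignment from a tuple -/
def unmk1 (g : Tup V R) : ∀ j, Rr (Pat g) j → R (j+1) :=
  fun j v => (g j v.1).getRight (mem_Pat.1 v.2)

/-- extract the reduced tuple -/
def unmk2 (g : Tup V R) : Tup (Vr (Pat g)) (Rr (Pat g)) :=
  fun j v =>
    let w := (g j v.1).getLeft (Sum.not_isRight.1 (fun hR => v.2 (mem_Pat.2 hR)))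
    if hw : w ∈ Pat g (j+1) then .inr ⟨w, hw⟩ else .inl ⟨w, hw⟩

lemma g_apply_eq_inl (g : Tup V R) {j : Fin (k+1)} (v : Vr (Pat g) j) :
    g j v.1 = .inl ((g j v.1).getLeft (Sum.not_isRight.1 (fun hR => v.2 (mem_Pat.2 hR)))) :=
  (Sum.inl_getLeft _ _).symm

lemma mk_unmk (g : Tup V R) : mk (unmk1 g) (unmk2 g) = g := by
  funext j v
  by_cases hv : v ∈ Pat g j
  · rw [mk, dif_pos hv]
    exact (Sum.inr_getRight _ _)
  · rw [mk, dif_neg hv]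
    rw [g_apply_eq_inl g ⟨v, hv⟩]
    congr 1
    rw [unmk2]
    split <;> rfl

lemma absorbing_unmk2 {g : Tup V R} (hg : Absorbing g) : Absorbing (unmk2 g) := by
  have key : ∀ t (j : Fin (k+1)) (v : V j) (hv : v ∉ Pat g j) (r : Σ j, R j),
      (stepW g)^[t] (.inl ⟨j, v⟩) = .inr r → Absorbed (unmk2 g) ⟨j, ⟨v, hv⟩⟩ := by
    intro t
    induction t with
    | zero => intro j v hv r hr; simp at hr
    | succ t ih =>
      intro j v hv r hr
      rw [Function.iterate_succ_apply] at hr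
      set w := (g j v).getLeft (Sum.not_isRight.1 (fun hR => hv (mem_Pat.2 hR))) with hwdef
      have hgw : g j v = .inl w := g_apply_eq_inl g ⟨v, hv⟩
      rw [stepW_inl_inl hgw] at hr
      by_cases hw : w ∈ Pat g (j+1)
      · refine absorbed_of_inr (r := ⟨w, hw⟩) ?_
        rw [unmk2]
        simp only [← hwdef]
        rw [dif_pos hw]
      · have habs := ih (j+1) w hw r hr
        refine absorbed_of_step (w := ⟨w, hw⟩) ?_ habs
        rw [unmk2]
        simp only [← hwdef]
        rw [dif_neg hw]
  intro ⟨j, vv⟩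
  obtain ⟨t, r, hr⟩ := hg ⟨j, vv.1⟩
  have := key t j vv.1 vv.2 r hr
  simpa using this

end Pat

section Count

lemma sum_pi_finset_prod {ι : Type*} [Fintype ι] [DecidableEq ι] {κ : ι → Type*}
    [∀ i, Fintype (κ i)] [∀ i, DecidableEq (κ i)] (f : ∀ i, κ i → ℤ) :
    ∑ x : ∀ i, κ i, ∏ i, f i (x i) = ∏ i, ∑ y : κ i, f i y := by
  rw [show (Finset.univ : Finset (∀ i, κ i)) = Fintype.piFinset (fun _ => Finset.univ)
      from (Fintype.piFinset_univ).symm]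
  exact (Finset.prod_univ_sum _ _).symm

lemma nat_card_sigma {ι : Type*} [Fintype ι] (f : ι → Type*) [∀ i, Finite (f i)] :
    Nat.card (Σ i, f i) = ∑ i, Nat.card (f i) := by
  letI : ∀ i, Fintype (f i) := fun i => Fintype.ofFinite _
  simp [Nat.card_eq_fintype_card, Fintype.card_sigma]

variable [∀ j, DecidableEq (V j)] [∀ j, Fintype (V j)] [∀ j, Fintype (R j)]

def Φ : (Σ B : ∀ j, Finset (V j),
      (∀ j, Rr B j → R (j+1)) × {h : Tup (Vr B) (Rr B) // Absorbing h}) →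
    {g : Tup V R // Absorbing g} :=
  fun x => ⟨mk x.2.1 x.2.2.1, absorbing_mk x.2.1 x.2.2.2⟩

lemma Φ_bijective : Function.Bijective (Φ (V := V) (R := R)) := by
  constructor
  · rintro ⟨B1, ρ1, h1, a1⟩ ⟨B2, ρ2, h2, a2⟩ heq
    have hg : mk ρ1 h1 = mk ρ2 h2 := congrArg Subtype.val heq
    have hB : B1 = B2 := by rw [← pat_mk ρ1 h1, hg, pat_mk]
    subst hB
    have hρ : ρ1 = ρ2 := by
      funext j v
      have hv := congrFun (congrFun hg j) v.1
      rw [mk, dif_pos v.2, mk, dif_pos v.2] at hv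
      simpa using hv
    subst hρ
    have hh : h1 = h2 := by
      funext j v
      have hv := congrFun (congrFun hg j) v.1
      rw [mk_apply_not_mem ρ1 h1 v, mk_apply_not_mem ρ1 h2 v] at hv
      replace hv := Sum.inl.inj hv
      rcases e1 : h1 j v with w1 | w1 <;> rcases e2 : h2 j v with w2 | w2 <;>
        rw [e1, e2] at hv <;> simp at hv
      · rw [Subtype.ext hv]
      · exact absurd (hv ▸ w2.2) w1.2
      · exact absurd (hv ▸ w1.2) w2.2
      · rw [hv]
    subst hh
    rfl
  · rintro ⟨g, hg⟩
    exact ⟨⟨Pat g, unmk1 g, ⟨unmk2 g, absorbing_unmk2 hg⟩⟩, Subtype.ext (mk_unmk g)⟩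

lemma card_Rr (B : ∀ j, Finset (V j)) (j : Fin (k+1)) :
    Nat.card (Rr B j) = (B j).card := by
  simp [Nat.card_eq_fintype_card]

lemma card_Vr (B : ∀ j, Finset (V j)) (j : Fin (k+1)) :
    Nat.card (Vr B j) = Fintype.card (V j) - (B j).card := by
  rw [Nat.card_eq_fintype_card, Fintype.card_subtype_compl (p := fun v => v ∈ B j)]
  simp

lemma card_forest_step :
    Nat.card {g : Tup V R // Absorbing g} =
      ∑ B : ∀ j, Finset (V j), (∏ j, Nat.card (R (j+1)) ^ (B j).card) *
        Nat.card {h : Tup (Vr B) (Rr B) // Absorbing h} := by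
  rw [← Nat.card_eq_of_bijective _ Φ_bijective, nat_card_sigma]
  refine Finset.sum_congr rfl fun B _ => ?_
  rw [Nat.card_prod, Nat.card_pi]
  congr 1
  refine Finset.prod_congr rfl fun j _ => ?_
  rw [Nat.card_fun]
  rw [card_Rr]

end Count

set_option maxHeartbeats 2000000 in
/-- The forest-count formula, by strong induction on the number of vertices. -/
theorem forest_count : ∀ (N : ℕ) (V R : Fin (k+1) → Type u)
    (_ : ∀ j, DecidableEq (V j)) (_ : ∀ j, Fintype (V j)) (_ : ∀ j, Fintype (R j)),
    (∑ j, Fintype.card (V j)) = N →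
    (Nat.card {g : Tup V R // Absorbing g} : ℤ) =
      ∏ j, ((Fintype.card (R (j+1)) : ℤ) + (Fintype.card (V (j+1)) : ℤ)) ^ Fintype.card (V j)
      - ∏ j, (Fintype.card (V j) : ℤ) *
          ((Fintype.card (R (j+1)) : ℤ) + (Fintype.card (V (j+1)) : ℤ)) ^ (Fintype.card (V j) - 1) := by
  intro N
  induction N using Nat.strong_induction_on with
  | _ N ih =>
  intro V R iD iV iR hsum
  by_cases h0 : ∀ j, Fintype.card (V j) = 0
  · -- base case : no vertices at all
    haveI : ∀ j, IsEmpty (V j) := fun j => Fintype.card_eq_zero_iff.1 (h0 j)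
    haveI : IsEmpty (Σ j, V j) := ⟨fun p => IsEmpty.false p.2⟩
    have hL : Nat.card {g : Tup V R // Absorbing g} = 1 := by
      have e : {g : Tup V R // Absorbing g} ≃ Tup V R :=
        Equiv.subtypeUnivEquiv (fun g (p : Σ j, V j) => (IsEmpty.false p).elim)
      rw [Nat.card_congr e, Nat.card_pi]
      refine Finset.prod_eq_one fun j _ => ?_
      rw [Nat.card_fun, Nat.card_eq_fintype_card (α := V j), h0 j, pow_zero]
    rw [hL]
    have h1 : ∏ j, ((Fintype.card (R (j+1)) : ℤ) + (Fintype.card (V (j+1)) : ℤ)) ^ Fintype.card (V j) = 1 :=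
      Finset.prod_eq_one fun j _ => by rw [h0 j, pow_zero]
    have h2 : ∏ j, (Fintype.card (V j) : ℤ) *
        ((Fintype.card (R (j+1)) : ℤ) + (Fintype.card (V (j+1)) : ℤ)) ^ (Fintype.card (V j) - 1) = 0 :=
      Finset.prod_eq_zero (Finset.mem_univ 0) (by rw [h0 0]; simp)
    rw [h1, h2]
    norm_num
  · push_neg at h0
    obtain ⟨j0, hj0⟩ := h0
    rw [card_forest_step]
    push_cast
    simp only [Nat.card_eq_fintype_card]
    -- value of each inner count
    have hterm : ∀ B : ∀ j, Finset (V j),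
        (Nat.card {h : Tup (Vr B) (Rr B) // Absorbing h} : ℤ) =
          ∏ j, (Fintype.card (V (j+1)) : ℤ) ^ (Fintype.card (V j) - (B j).card)
          - ∏ j, ((Fintype.card (V j) - (B j).card : ℕ) : ℤ) *
              (Fintype.card (V (j+1)) : ℤ) ^ (Fintype.card (V j) - (B j).card - 1) := by
      intro B
      by_cases hB : ∀ j, B j = ∅
      · -- pattern empty : both sides are zero
        haveI : ∀ j, IsEmpty (Rr B j) := fun j => ⟨fun v => by
          obtain ⟨x, hx⟩ := v; rw [hB j] at hx; exact Finset.notMem_empty _ hx⟩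
        have hne : Nonempty (Σ j, Vr B j) := by
          have : Nonempty (V j0) := Fintype.card_pos_iff.1 (Nat.pos_of_ne_zero hj0)
          obtain ⟨v0⟩ := this
          exact ⟨⟨j0, ⟨v0, by rw [hB j0]; exact Finset.notMem_empty _⟩⟩⟩
        haveI : IsEmpty {h : Tup (Vr B) (Rr B) // Absorbing h} :=
          ⟨fun x => not_absorbing_of_no_roots hne x.1 x.2⟩
        rw [Nat.card_of_isEmpty]
        have hz := G_zero (k := k) (fun j => Fintype.card (V j)) ⟨j0, hj0⟩
        simp only [hB, Finset.card_empty, Nat.sub_zero] at *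
        rw [← hz]
        simp
      · -- nonempty pattern : apply the induction hypothesis
        push_neg at hB
        obtain ⟨j1, hj1⟩ := hB
        have hb1 : 0 < (B j1).card := Finset.card_pos.2 hj1
        have hlt : (∑ j, Fintype.card (Vr B j)) < N := by
          rw [← hsum]
          refine Finset.sum_lt_sum (fun j _ => ?_) ⟨j1, Finset.mem_univ j1, ?_⟩
          · rw [← Nat.card_eq_fintype_card, card_Vr]; exact Nat.sub_le _ _
          · rw [← Nat.card_eq_fintype_card, card_Vr]
            exact Nat.sub_lt (lt_of_lt_of_le hb1 (Finset.card_le_univ _)) hb1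
        have := ih _ hlt (Vr B) (Rr B) (fun j => inferInstance) (fun j => inferInstance)
          (fun j => inferInstance) rfl
        rw [this]
        have hVr : ∀ j, Fintype.card (Vr B j) = Fintype.card (V j) - (B j).card :=
          fun j => by rw [← Nat.card_eq_fintype_card, card_Vr]
        have hRr : ∀ j, Fintype.card (Rr B j) = (B j).card :=
          fun j => by rw [← Nat.card_eq_fintype_card, card_Rr]
        have hbase : ∀ j : Fin (k+1), ((B j).card : ℤ) +
            ((Fintype.card (V j) - (B j).card : ℕ) : ℤ) = (Fintype.card (V j) : ℤ) := fun j => by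
          have h := Finset.card_le_univ (B j)
          rw [Nat.cast_sub h]
          ring
        congr 1
        · exact Finset.prod_congr rfl fun j _ => by simp only [hRr, hVr, hbase]
        · exact Finset.prod_congr rfl fun j _ => by simp only [hRr, hVr, hbase]
    -- now the algebraic computation
    rw [Finset.sum_congr rfl (fun B _ => by rw [hterm B])]
    have hsplit : ∀ B : ∀ j, Finset (V j),
        (∏ j, ((Fintype.card (R (j+1)) : ℤ)) ^ (B j).card) *
          (∏ j, (Fintype.card (V (j+1)) : ℤ) ^ (Fintype.card (V j) - (B j).card)
           - ∏ j, ((Fintype.card (V j) - (B j).card : ℕ) : ℤ) *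
              (Fintype.card (V (j+1)) : ℤ) ^ (Fintype.card (V j) - (B j).card - 1))
        = (∏ j, ((Fintype.card (R (j+1)) : ℤ)) ^ (B j).card *
              (Fintype.card (V (j+1)) : ℤ) ^ (Fintype.card (V j) - (B j).card))
          - ∏ j, ((Fintype.card (R (j+1)) : ℤ)) ^ (B j).card *
              (((Fintype.card (V j) - (B j).card : ℕ) : ℤ) *
                (Fintype.card (V (j+1)) : ℤ) ^ (Fintype.card (V j) - (B j).card - 1)) := by
      intro B
      rw [mul_sub, ← Finset.prod_mul_distrib, ← Finset.prod_mul_distrib]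
    rw [Finset.sum_congr rfl (fun B _ => hsplit B), Finset.sum_sub_distrib]
    congr 1
    · exact (sum_pi_finset_prod (κ := fun j => Finset (V j))
          (fun j S => ((Fintype.card (R (j+1)) : ℤ)) ^ S.card *
            (Fintype.card (V (j+1)) : ℤ) ^ (Fintype.card (V j) - S.card))).trans
        (Finset.prod_congr rfl fun j _ => sum_subsets_pow _ _)
    · exact (sum_pi_finset_prod (κ := fun j => Finset (V j))
          (fun j S => ((Fintype.card (R (j+1)) : ℤ)) ^ S.card *
            (((Fintype.card (V j) - S.card : ℕ) : ℤ) *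
              (Fintype.card (V (j+1)) : ℤ) ^ (Fintype.card (V j) - S.card - 1)))).trans
        (Finset.prod_congr rfl fun j _ => sum_subsets_pow' _ _)



section PartB

variable {X : Fin (k + 1) → Type u}

/-- transport the second component of a sigma along an index equality -/
def extract {j : Fin (k+1)} (p : Σ i, X i) (h : p.1 = j) : X j := h ▸ p.2

lemma extract_spec {j : Fin (k+1)} (p : Σ i, X i) (h : p.1 = j) :
    (⟨j, extract p h⟩ : Σ i, X i) = p := by
  cases p
  subst h
  rfl

lemma sigma_mk_inj {j : Fin (k+1)} {a b : X j} (h : (⟨j, a⟩ : Σ i, X i) = ⟨j, b⟩) : a = b := by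
  have h2 := (Sigma.mk.inj_iff.mp h).2
  exact eq_of_heq h2

lemma comp_spec (f : ∀ i : Fin (k + 1), X i → X (i + 1)) (v : X 0) :
    (⟨0, comp f v⟩ : Σ i, X i) = (step f)^[k+1] ⟨0, v⟩ :=
  extract_spec _ _

lemma comp_iterate (f : ∀ i : Fin (k + 1), X i → X (i + 1)) (m : ℕ) (v : X 0) :
    (⟨0, (comp f)^[m] v⟩ : Σ i, X i) = (step f)^[(k+1)*m] ⟨0, v⟩ := by
  induction m with
  | zero => simp
  | succ m ih =>
    rw [Function.iterate_succ_apply', comp_spec, ih, ← Function.iterate_add_apply]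
    congr 1
    ring

section Cycle

variable (f : ∀ i : Fin (k + 1), X i → X (i + 1)) (c : ∀ j, X j)

lemma step_cycle (hc : ∀ j, f j (c j) = c (j+1)) (j : Fin (k+1)) :
    step f ⟨j, c j⟩ = ⟨j+1, c (j+1)⟩ := by
  show (⟨j+1, f j (c j)⟩ : Σ i, X i) = _
  rw [hc]

lemma step_cycle_iter (hc : ∀ j, f j (c j) = c (j+1)) (j : Fin (k+1)) (t : ℕ) :
    (step f)^[t] ⟨j, c j⟩ = ⟨j + t, c (j + t)⟩ := by
  induction t with
  | zero =>
    have h0 : j + ((0:ℕ) : Fin (k+1)) = j := by push_cast; ring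
    rw [h0]
    rfl
  | succ t ih =>
    rw [Function.iterate_succ_apply', ih, step_cycle f c hc]
    have he : (j + (t : Fin (k+1))) + 1 = j + ((t+1 : ℕ) : Fin (k+1)) := by push_cast; ring
    rw [he]

end Cycle

variable [∀ j, DecidableEq (X j)]

/-- vertex/root decomposition of `X j` relative to a cycle `c` -/
abbrev Vc (c : ∀ j, X j) : Fin (k+1) → Type u := fun j => {x : X j // x ≠ c j}
abbrev Rc (c : ∀ j, X j) : Fin (k+1) → Type u := fun j => {x : X j // x = c j}

/-- reassemble a cyclic tuple of functions from a cycle and a forest -/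
def toF (c : ∀ j, X j) (g : Tup (Vc c) (Rc c)) : ∀ i : Fin (k + 1), X i → X (i+1) :=
  fun j x => if h : x = c j then c (j+1) else ((g j ⟨x, h⟩).elim Subtype.val Subtype.val)

lemma toF_cycle (c : ∀ j, X j) (g : Tup (Vc c) (Rc c)) (j : Fin (k+1)) :
    toF c g j (c j) = c (j+1) := dif_pos rfl

lemma toF_not_cycle (c : ∀ j, X j) (g : Tup (Vc c) (Rc c)) {j : Fin (k+1)} (v : Vc c j) :
    toF c g j v.1 = ((g j v).elim Subtype.val Subtype.val) := by
  rw [toF, dif_neg v.2]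

/-- points absorbed by the forest have orbits hitting the cycle -/
lemma hits_cycle_of_absorbed (c : ∀ j, X j) (g : Tup (Vc c) (Rc c))
    {j : Fin (k+1)} (v : Vc c j) (habs : Absorbed g ⟨j, v⟩) :
    ∃ (t : ℕ) (j' : Fin (k+1)), (step (toF c g))^[t] ⟨j, v.1⟩ = ⟨j', c j'⟩ := by
  obtain ⟨t, r, hr⟩ := habs
  induction t generalizing j v with
  | zero => simp at hr
  | succ t ih =>
    rw [Function.iterate_succ_apply] at hr
    rcases hw : g j v with w | w
    · rw [stepW_inl_inl hw] at hr
      obtain ⟨t', j', ht'⟩ := ih w hr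
      refine ⟨t' + 1, j', ?_⟩
      rw [Function.iterate_add_apply]
      have h1 : step (toF c g) ⟨j, v.1⟩ = ⟨j+1, w.1⟩ := by
        show (⟨j+1, toF c g j v.1⟩ : Σ i, X i) = _
        rw [toF_not_cycle, hw]; rfl
      simp only [Function.iterate_one, h1]
      exact ht'
    · refine ⟨1, j+1, ?_⟩
      have h1 : step (toF c g) ⟨j, v.1⟩ = ⟨j+1, w.1⟩ := by
        show (⟨j+1, toF c g j v.1⟩ : Σ i, X i) = _
        rw [toF_not_cycle, hw]; rfl
      rw [Function.iterate_one, h1, w.2]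

lemma eq_c0_of_sigma (c : ∀ j, X j) {a : X 0} {i : Fin (k+1)}
    (h : (⟨0, a⟩ : Σ i, X i) = ⟨i, c i⟩) : a = c 0 := by
  have h1 : (0 : Fin (k+1)) = i := congrArg Sigma.fst h
  subst h1
  exact sigma_mk_inj h

variable [∀ j, Fintype (X j)]

lemma toF_fix (c : ∀ j, X j) (g : Tup (Vc c) (Rc c)) : comp (toF c g) (c 0) = c 0 := by
  have h := comp_spec (toF c g) (c 0)
  rw [step_cycle_iter (toF c g) c (toF_cycle c g) 0 (k+1)] at h
  have h2 : (0 : Fin (k+1)) + ((k+1 : ℕ) : Fin (k+1)) = 0 := by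
    rw [Fin.natCast_self]; ring
  rw [h2] at h
  exact sigma_mk_inj h

lemma toF_EC (c : ∀ j, X j) (g : Tup (Vc c) (Rc c)) (hg : Absorbing g) :
    EventuallyConstant (toF c g) := by
  set F := toF c g with hF
  have key : ∀ v : X 0, ∃ m0, ∀ m ≥ m0, (comp F)^[m] v = c 0 := by
    intro v
    by_cases hv : v = c 0
    · exact ⟨0, fun m _ => by rw [hv, Function.iterate_fixed (toF_fix c g) m]⟩
    · obtain ⟨t, j', ht⟩ := hits_cycle_of_absorbed c g ⟨v, hv⟩ (hg ⟨0, ⟨v, hv⟩⟩)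
      refine ⟨t, fun m hm => ?_⟩
      have hbig : (k+1)*m ≥ t := le_trans hm (Nat.le_mul_of_pos_left m (Nat.succ_pos k))
      have hsplit : (k+1)*m = ((k+1)*m - t) + t := by omega
      have hcomp := comp_iterate F m v
      rw [hsplit, Function.iterate_add_apply, ht,
        step_cycle_iter F c (toF_cycle c g) j' ((k+1)*m - t)] at hcomp
      exact eq_c0_of_sigma c hcomp
  choose φ hφ using key
  refine ⟨Finset.univ.sup φ, c 0, fun v => hφ v _ (Finset.le_sup (Finset.mem_univ v))⟩

lemma ec_fixed (f : ∀ i : Fin (k + 1), X i → X (i + 1)) (hf : EventuallyConstant f)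
    (hne : Nonempty (X 0)) :
    ∃ (c₀ : X 0) (m₀ : ℕ), comp f c₀ = c₀ ∧ ∀ v, (comp f)^[m₀] v = c₀ := by
  obtain ⟨m, c₀, h⟩ := hf
  obtain ⟨v⟩ := hne
  refine ⟨c₀, m, ?_, h⟩
  calc comp f c₀ = comp f ((comp f)^[m] v) := by rw [h v]
    _ = (comp f)^[m+1] v := (Function.iterate_succ_apply' _ _ _).symm
    _ = (comp f)^[m] (comp f v) := Function.iterate_succ_apply _ _ _
    _ = c₀ := h _

/-- the reduced tuple extracted from `f` relative to a cycle `c` -/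
def ofF (f : ∀ i : Fin (k + 1), X i → X (i + 1)) (c : ∀ j, X j) : Tup (Vc c) (Rc c) :=
  fun j v => if h : f j v.1 = c (j+1) then .inr ⟨f j v.1, h⟩ else .inl ⟨f j v.1, h⟩

lemma toF_ofF (f : ∀ i : Fin (k + 1), X i → X (i + 1)) (c : ∀ j, X j)
    (hcyc : ∀ j, f j (c j) = c (j+1)) : toF c (ofF f c) = f := by
  funext j x
  by_cases hx : x = c j
  · rw [toF, dif_pos hx, hx, hcyc]
  · rw [toF, dif_neg hx, ofF]
    split <;> rfl

lemma absorbed_ofF (f : ∀ i : Fin (k + 1), X i → X (i + 1)) (c : ∀ j, X j) :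
    ∀ (t : ℕ) (j : Fin (k+1)) (x : X j) (hx : x ≠ c j) (j' : Fin (k+1)),
      (step f)^[t] ⟨j, x⟩ = ⟨j', c j'⟩ → Absorbed (ofF f c) ⟨j, ⟨x, hx⟩⟩ := by
  intro t
  induction t with
  | zero =>
    intro j x hx j' h
    have h1 : j = j' := congrArg Sigma.fst h
    subst h1
    exact absurd (sigma_mk_inj h) hx
  | succ t ih =>
    intro j x hx j' h
    rw [Function.iterate_succ_apply] at h
    have hstep : step f ⟨j, x⟩ = ⟨j+1, f j x⟩ := rfl
    rw [hstep] at h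
    by_cases hy : f j x = c (j+1)
    · exact absorbed_of_inr (r := ⟨f j x, hy⟩) (by rw [ofF, dif_pos hy])
    · exact absorbed_of_step (w := ⟨f j x, hy⟩) (by rw [ofF, dif_neg hy])
        (ih (j+1) (f j x) hy j' h)

lemma orbit_hits (f : ∀ i : Fin (k + 1), X i → X (i + 1)) (m₀ : ℕ) (c₀ : X 0)
    (hm : ∀ v, (comp f)^[m₀] v = c₀) (j : Fin (k+1)) (x : X j) :
    ∃ t : ℕ, (step f)^[t] ⟨j, x⟩ = ⟨0, c₀⟩ := by
  have h0 : ((step f)^[(k+1) - j.val] ⟨j, x⟩).1 = 0 := by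
    rw [step_iterate_fst]
    have h2 : ((j.val : ℕ) : Fin (k+1)) + (((k+1) - j.val : ℕ) : Fin (k+1))
        = ((j.val + ((k+1) - j.val) : ℕ) : Fin (k+1)) := by push_cast; ring
    have h3 : j.val + ((k+1) - j.val) = k+1 := by have := j.isLt; omega
    calc j + (((k+1) - j.val : ℕ) : Fin (k+1))
        = ((j.val : ℕ) : Fin (k+1)) + (((k+1) - j.val : ℕ) : Fin (k+1)) := by
          rw [Fin.cast_val_eq_self]
      _ = ((k+1 : ℕ) : Fin (k+1)) := by rw [h2, h3]
      _ = 0 := Fin.natCast_self _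
  refine ⟨(k+1)*m₀ + ((k+1) - j.val), ?_⟩
  rw [Function.iterate_add_apply]
  rw [← extract_spec _ h0, ← comp_iterate, hm]

lemma cycle_exists (f : ∀ i : Fin (k + 1), X i → X (i + 1)) (c₀ : X 0)
    (hfix : comp f c₀ = c₀) :
    ∃ c : ∀ j, X j, (∀ j, f j (c j) = c (j+1)) ∧ c 0 = c₀ := by
  have hfst : ∀ j : Fin (k+1), ((step f)^[j.val] (⟨0, c₀⟩ : Σ i, X i)).1 = j := by
    intro j
    rw [step_iterate_fst]
    simp [Fin.cast_val_eq_self]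
  set c : ∀ j, X j := fun j => extract ((step f)^[j.val] ⟨0, c₀⟩) (hfst j) with hcdef
  have hcl : ∀ j, (⟨j, c j⟩ : Σ i, X i) = (step f)^[j.val] ⟨0, c₀⟩ :=
    fun j => extract_spec _ _
  have hc0 : c 0 = c₀ := sigma_mk_inj (hcl 0)
  refine ⟨c, fun j => ?_, hc0⟩
  have e1 : (⟨j+1, f j (c j)⟩ : Σ i, X i) = (step f)^[j.val + 1] ⟨0, c₀⟩ := by
    rw [Function.iterate_succ_apply', ← hcl j]
    rfl
  have e2 : (⟨j+1, c (j+1)⟩ : Σ i, X i) = (step f)^[j.val + 1] ⟨0, c₀⟩ := by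
    by_cases hj : j = Fin.last k
    · subst hj
      have hv : (Fin.last k).val + 1 = k+1 := rfl
      rw [hv, ← comp_spec, hfix]
      have hlast : Fin.last k + 1 = 0 := by
        rw [Fin.last_add_one]
      rw [hlast, hc0]
    · have hval : (j+1).val = j.val + 1 := by
        rw [Fin.val_add_one_of_lt (Fin.lt_last_iff_ne_last.2 hj)]
      rw [← hval]
      exact hcl (j+1)
  exact sigma_mk_inj (e1.trans e2.symm)

variable (X) in
/-- the master bijection: eventually constant tuples = cycle + absorbed forest -/
def Ψ : (Σ c : ∀ j, X j, {g : Tup (Vc c) (Rc c) // Absorbing g}) →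
    {f : ∀ i : Fin (k + 1), X i → X (i+1) // EventuallyConstant f} :=
  fun x => ⟨toF x.1 x.2.1, toF_EC x.1 x.2.1 x.2.2⟩

lemma Ψ_bijective : Function.Bijective (Ψ X) := by
  constructor
  · rintro ⟨c, g, hg⟩ ⟨c', g', hg'⟩ heq
    have hfe : toF c g = toF c' g' := congrArg Subtype.val heq
    have hcyc : ∀ j, toF c g j (c j) = c (j+1) := toF_cycle c g
    have hcyc' : ∀ j, toF c g j (c' j) = c' (j+1) := fun j => by
      rw [hfe]; exact toF_cycle c' g' j
    have prop : ∀ (j0 : Fin (k+1)), c j0 = c' j0 →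
        ∀ s : ℕ, c (j0 + (s : Fin (k+1))) = c' (j0 + (s : Fin (k+1))) := by
      intro j0 h s
      induction s with
      | zero =>
        have h0 : j0 + ((0:ℕ) : Fin (k+1)) = j0 := by push_cast; ring
        rw [h0]; exact h
      | succ s ih =>
        have h1 : j0 + ((s+1 : ℕ) : Fin (k+1)) = (j0 + ((s:ℕ) : Fin (k+1))) + 1 := by
          push_cast; ring
        rw [h1, ← hcyc, ← hcyc', ih]
    have hall : (∃ j0, c j0 = c' j0) → c = c' := by
      rintro ⟨j0, h⟩
      funext j
      have hp := prop j0 h ((j - j0).val)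
      rwa [Fin.cast_val_eq_self, add_sub_cancel] at hp
    have hcc : c = c' := by
      by_cases h : c 0 = c' 0
      · exact hall ⟨0, h⟩
      · have hx : c' 0 ≠ c 0 := fun hh => h hh.symm
        obtain ⟨t, j', ht⟩ := hits_cycle_of_absorbed c g ⟨c' 0, hx⟩ (hg ⟨0, ⟨c' 0, hx⟩⟩)
        have ht2 := step_cycle_iter (toF c g) c' hcyc' 0 t
        rw [ht] at ht2
        have h1 : j' = 0 + (t : Fin (k+1)) := congrArg Sigma.fst ht2
        subst h1
        exact hall ⟨_, sigma_mk_inj ht2⟩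
    subst hcc
    have hgg : g = g' := by
      funext j v
      have hv := congrFun (congrFun hfe j) v.1
      rw [toF_not_cycle c g v, toF_not_cycle c g' v] at hv
      rcases e1 : g j v with w1 | w1 <;> rcases e2 : g' j v with w2 | w2 <;>
        rw [e1, e2] at hv <;> simp at hv
      · rw [Subtype.ext hv]
      · exact absurd (hv.trans w2.2) w1.2
      · exact absurd (hv.symm.trans w1.2) w2.2
      · rw [Subtype.ext hv]
    subst hgg
    rfl
  · rintro ⟨f, hf⟩
    have hne : Nonempty (X 0) := by
      obtain ⟨m, cc, -⟩ := hf
      exact ⟨cc⟩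
    obtain ⟨c₀, m₀, hfix, hm⟩ := ec_fixed f hf hne
    obtain ⟨c, hcyc, hc0⟩ := cycle_exists f c₀ hfix
    have habs : Absorbing (ofF f c) := by
      rintro ⟨j, v⟩
      obtain ⟨t, ht⟩ := orbit_hits f m₀ c₀ hm j v.1
      refine absorbed_ofF f c t j v.1 v.2 0 ?_
      rw [hc0]
      exact ht
    exact ⟨⟨c, ⟨ofF f c, habs⟩⟩, Subtype.ext (toF_ofF f c hcyc)⟩

theorem ec_count (hpos : ∀ j, 1 ≤ Fintype.card (X j)) :
    (Nat.card {f : ∀ i : Fin (k + 1), X i → X (i+1) // EventuallyConstant f} : ℤ) =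
      (∏ j : Fin (k+1), (Fintype.card (X j) : ℤ)) *
      (∏ j : Fin (k+1), (Fintype.card (X (j+1)) : ℤ) ^ (Fintype.card (X j) - 1)
       - ∏ j : Fin (k+1), ((Fintype.card (X j) - 1 : ℕ) : ℤ) *
           (Fintype.card (X (j+1)) : ℤ) ^ (Fintype.card (X j) - 1 - 1)) := by
  rw [← Nat.card_eq_of_bijective _ Ψ_bijective, nat_card_sigma]
  have hV : ∀ (c : ∀ j, X j) (j : Fin (k+1)),
      Fintype.card (Vc c j) = Fintype.card (X j) - 1 := by
    intro c j
    rw [Fintype.card_subtype_compl (p := fun x => x = c j), Fintype.card_subtype_eq]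
  have hR : ∀ (c : ∀ j, X j) (j : Fin (k+1)), Fintype.card (Rc c j) = 1 :=
    fun c j => Fintype.card_subtype_eq _
  have hterm : ∀ c : ∀ j, X j,
      (Nat.card {g : Tup (Vc c) (Rc c) // Absorbing g} : ℤ) =
        ∏ j : Fin (k+1), (Fintype.card (X (j+1)) : ℤ) ^ (Fintype.card (X j) - 1)
        - ∏ j : Fin (k+1), ((Fintype.card (X j) - 1 : ℕ) : ℤ) *
            (Fintype.card (X (j+1)) : ℤ) ^ (Fintype.card (X j) - 1 - 1) := by
    intro c
    rw [forest_count (∑ j, Fintype.card (Vc c j)) (Vc c) (Rc c)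
      (fun j => inferInstance) (fun j => inferInstance) (fun j => inferInstance) rfl]
    have hbase : ∀ j : Fin (k+1), ((Fintype.card (Rc c (j+1)) : ℤ))
        + (Fintype.card (Vc c (j+1)) : ℤ) = (Fintype.card (X (j+1)) : ℤ) := by
      intro j
      rw [hR, hV]
      have := hpos (j+1)
      push_cast [Nat.cast_sub this]
      ring
    congr 1
    · exact Finset.prod_congr rfl fun j _ => by rw [hbase, hV]
    · exact Finset.prod_congr rfl fun j _ => by rw [hbase, hV]
  push_cast
  rw [Finset.sum_congr rfl (fun c _ => hterm c), Finset.sum_const, Finset.card_univ,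
    Fintype.card_pi, nsmul_eq_mul]
  push_cast
  ring

end PartB

end ECaux

/-- The number of eventually constant `(k+1)`-tuples on sets of cardinalities `n i`
equals `(∏ᵢ nᵢ^(n_{i-1}-1)) · (∏ⱼ nⱼ − ∏ⱼ (nⱼ − 1))`, indices modulo `k+1`. -/
theorem stmt1 (k : ℕ) (X : Fin (k + 1) → Type u) [∀ i, Fintype (X i)]
    (n : Fin (k + 1) → ℕ) (hcard : ∀ i, Fintype.card (X i) = n i) (hn : ∀ i, 1 ≤ n i) :
    Nat.card {f : ∀ i : Fin (k + 1), X i → X (i + 1) // EventuallyConstant f} =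
      (∏ i, n i ^ (n (i - 1) - 1)) * ((∏ j, n j) - ∏ j, (n j - 1)) := by
  letI : ∀ i, DecidableEq (X i) := fun i => Classical.decEq _
  have hpos : ∀ i, 1 ≤ Fintype.card (X i) := fun i => by rw [hcard]; exact hn i
  have h := ECaux.ec_count (X := X) hpos
  simp only [hcard] at h
  have hle : (∏ j, (n j - 1)) ≤ ∏ j, n j :=
    Finset.prod_le_prod' (fun j _ => Nat.sub_le _ _)
  zify [hle]
  rw [h]
  push_cast
  have E1 : ∏ i : Fin (k+1), ((n i : ℤ)) ^ (n (i - 1) - 1)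
      = ∏ j : Fin (k+1), ((n (j+1) : ℤ)) ^ (n j - 1) := by
    rw [← ECaux.prod_shift (fun i => ((n i : ℤ)) ^ (n (i - 1) - 1))]
    exact Finset.prod_congr rfl fun j _ => by rw [add_sub_cancel_right]
  have E2 : (∏ j : Fin (k+1), (n j : ℤ)) *
      (∏ j : Fin (k+1), ((n j - 1 : ℕ) : ℤ) * (n (j+1) : ℤ) ^ (n j - 1 - 1))
      = (∏ j : Fin (k+1), ((n j - 1 : ℕ) : ℤ)) *
        ∏ j : Fin (k+1), (n (j+1) : ℤ) ^ (n j - 1) := by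
    rw [show (∏ j : Fin (k+1), (n j : ℤ)) = ∏ j : Fin (k+1), (n (j+1) : ℤ) from
      (ECaux.prod_shift _).symm, ← Finset.prod_mul_distrib, ← Finset.prod_mul_distrib]
    refine Finset.prod_congr rfl fun j _ => ?_
    rcases Nat.eq_zero_or_pos (n j - 1) with h' | h'
    · rw [h']; simp
    · have he : n j - 1 = (n j - 1 - 1) + 1 := by omega
      rw [he]
      push_cast
      ring
  rw [E1]
  calc (∏ j : Fin (k+1), (n j : ℤ)) *
        (∏ j : Fin (k+1), (n (j+1) : ℤ) ^ (n j - 1)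
          - ∏ j : Fin (k+1), ((n j - 1 : ℕ) : ℤ) * (n (j+1) : ℤ) ^ (n j - 1 - 1))
      = (∏ j : Fin (k+1), (n (j+1) : ℤ) ^ (n j - 1)) * (∏ j : Fin (k+1), (n j : ℤ))
        - (∏ j : Fin (k+1), (n j : ℤ)) *
          ∏ j : Fin (k+1), ((n j - 1 : ℕ) : ℤ) * (n (j+1) : ℤ) ^ (n j - 1 - 1) := by ring
    _ = (∏ j : Fin (k+1), (n (j+1) : ℤ) ^ (n j - 1)) * (∏ j : Fin (k+1), (n j : ℤ))
        - (∏ j : Fin (k+1), ((n j - 1 : ℕ) : ℤ)) *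
          ∏ j : Fin (k+1), (n (j+1) : ℤ) ^ (n j - 1) := by rw [E2]
    _ = (∏ j : Fin (k+1), (n (j+1) : ℤ) ^ (n j - 1)) *
        ((∏ j : Fin (k+1), (n j : ℤ)) - ∏ j : Fin (k+1), ((n j - 1 : ℕ) : ℤ)) := by ring
end

section
/- Let U_1,…,U_k be pairwise disjoint finite nonempty sets and f_i : U_i → U_{i+1} functions (indices modulo k), and let F : U → U be the induced endomorphism on U = U_1 ∪ ⋯ ∪ U_k given by F(u) = f_i(u) for u ∈ U_i. Then F is a single cycle on U (i.e., F is a cyclic permutation of U whose orbit is all of U) if and only if every f_i is a bijection and the composition f_k ∘ ⋯ ∘ f_1 : U_1 → U_1 is a cyclic permutation of U_1. In particular, if F is a single cycle then all U_i have the same cardinality. -/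
universe u

variable {k : ℕ} {X : Fin (k + 1) → Type u}

open Fin.NatCast Fin.CommRing

lemma sigma_eq_of_fst_eq {p : Σ i, X i} {j : Fin (k + 1)} (h : p.1 = j) :
    p = ⟨j, h ▸ p.2⟩ := by cases p; subst h; rfl

lemma step_comp_eq (f : ∀ i : Fin (k + 1), X i → X (i + 1)) (v : X 0) :
    (step f)^[k + 1] (⟨0, v⟩ : Σ i, X i) = ⟨0, comp f v⟩ :=
  sigma_eq_of_fst_eq (by rw [step_iterate_fst]; simp)

lemma step_comp_iter (f : ∀ i : Fin (k + 1), X i → X (i + 1)) (m : ℕ) (v : X 0) :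
    (step f)^[(k + 1) * m] (⟨0, v⟩ : Σ i, X i) = ⟨0, (comp f)^[m] v⟩ := by
  induction m generalizing v with
  | zero => simp
  | succ m ih =>
    rw [Nat.mul_succ, Function.iterate_add_apply, step_comp_eq, Function.iterate_succ_apply, ih]

/-- Let `U 0, …, U k` be disjoint finite nonempty sets and `f i : U i → U (i+1)`
(indices modulo `k+1`), with induced endomorphism `step f` on the disjoint union.
Then `step f` is a single cycle on the union (a cyclic permutation whose orbit is
everything) iff every `f i` is a bijection and the composite `f k ∘ ⋯ ∘ f 0` is a
cyclic permutation of `U 0`.  In particular, if `step f` is a single cycle then all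
the sets `U i` have the same cardinality. -/
theorem stmt6 (k : ℕ) (X : Fin (k + 1) → Type u) [∀ i, Fintype (X i)]
    [∀ i, Nonempty (X i)] (f : ∀ i : Fin (k + 1), X i → X (i + 1)) :
    ((Function.Bijective (step f) ∧
        ∀ p q : Σ i, X i, ∃ j : ℕ, (step f)^[j] p = q) ↔
      ((∀ i, Function.Bijective (f i)) ∧ Function.Bijective (comp f) ∧
        ∀ x y : X 0, ∃ j : ℕ, (comp f)^[j] x = y)) ∧
    ((Function.Bijective (step f) ∧
        ∀ p q : Σ i, X i, ∃ j : ℕ, (step f)^[j] p = q) →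
      ∀ i i' : Fin (k + 1), Fintype.card (X i) = Fintype.card (X i')) := by
  have hfkey : (Function.Bijective (step f) ∧
      ∀ p q : Σ i, X i, ∃ j : ℕ, (step f)^[j] p = q) → ∀ i, Function.Bijective (f i) := by
    rintro ⟨hbij, -⟩ i
    constructor
    · intro x y hxy
      have h : step f ⟨i, x⟩ = step f ⟨i, y⟩ := by unfold step; simp only [hxy]
      exact sigma_mk_injective (hbij.1 h)
    · intro y
      obtain ⟨p, hp⟩ := hbij.2 ⟨i + 1, y⟩
      have h2 : p.1 = i := add_right_cancel (show p.1 + 1 = i + 1 from congrArg Sigma.fst hp)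
      rw [sigma_eq_of_fst_eq h2] at hp
      exact ⟨h2 ▸ p.2, sigma_mk_injective hp⟩
  constructor
  · constructor
    · intro H
      obtain ⟨hbij, htrans⟩ := H
      refine ⟨hfkey ⟨hbij, htrans⟩, ?_, ?_⟩
      · have hstepit : Function.Bijective ((step f)^[k + 1]) := hbij.iterate (k + 1)
        constructor
        · intro x y hxy
          have h : (⟨0, x⟩ : Σ i, X i) = ⟨0, y⟩ := by
            apply hstepit.1
            rw [step_comp_eq, step_comp_eq, hxy]
          exact sigma_mk_injective h
        · intro y
          obtain ⟨p, hp⟩ := hstepit.2 ⟨0, y⟩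
          have h0 : p.1 = 0 := by
            have h1 := congrArg Sigma.fst hp
            rw [step_iterate_fst] at h1
            simpa using h1
          rw [sigma_eq_of_fst_eq h0, step_comp_eq] at hp
          exact ⟨h0 ▸ p.2, sigma_mk_injective hp⟩
      · intro x y
        obtain ⟨j, hj⟩ := htrans ⟨0, x⟩ ⟨0, y⟩
        have hj0 : (j : Fin (k + 1)) = 0 := by
          have h1 := congrArg Sigma.fst hj
          rw [step_iterate_fst] at h1
          simpa using h1
        obtain ⟨m, rfl⟩ := (Fin.natCast_eq_zero).mp hj0
        rw [step_comp_iter] at hj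
        exact ⟨m, sigma_mk_injective hj⟩
    · rintro ⟨hf, hc, ht⟩
      have hinj : Function.Injective (step f) := by
        rintro ⟨i, x⟩ ⟨j, y⟩ h
        have h1 : i + 1 = j + 1 := congrArg Sigma.fst h
        have h2 : i = j := add_right_cancel h1
        subst h2
        exact congrArg (Sigma.mk i) ((hf i).1 (sigma_mk_injective h))
      have hbij : Function.Bijective (step f) := Finite.injective_iff_bijective.mp hinj
      refine ⟨hbij, fun p q => ?_⟩
      set n1 := (k + 1) - (p.1 : ℕ) with hn1
      have hA : ((step f)^[n1] p).1 = 0 := by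
        rw [step_iterate_fst]
        rw [← Fin.cast_val_eq_self p.1, ← Nat.cast_add,
          Nat.add_sub_cancel' p.1.isLt.le, Fin.natCast_self]
      set n2 := (q.1 : ℕ) with hn2
      obtain ⟨s, hs⟩ := (hbij.iterate n2).2 q
      have hs0 : s.1 = 0 := by
        have h1 := congrArg Sigma.fst hs
        rw [step_iterate_fst, hn2, Fin.cast_val_eq_self] at h1
        simpa using h1
      rw [sigma_eq_of_fst_eq hs0] at hs
      obtain ⟨m, hm⟩ := ht (hA ▸ ((step f)^[n1] p).2) (hs0 ▸ s.2)
      refine ⟨n2 + ((k + 1) * m + n1), ?_⟩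
      rw [Function.iterate_add_apply, Function.iterate_add_apply,
        sigma_eq_of_fst_eq hA, step_comp_iter, hm]
      exact hs
  · intro H i i'
    have hf := hfkey H
    have hcard : ∀ i : Fin (k + 1), Fintype.card (X i) = Fintype.card (X (i + 1)) :=
      fun i => Fintype.card_of_bijective (hf i)
    have key : ∀ n : ℕ, Fintype.card (X (n : Fin (k + 1))) = Fintype.card (X 0) := by
      intro n
      induction n with
      | zero => simp
      | succ n ih => rw [Nat.cast_succ, ← hcard, ih]
    rw [← Fin.cast_val_eq_self i, ← Fin.cast_val_eq_self i', key, key]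
end

section
/- Let X_1 and X_2 be disjoint finite sets of cardinalities n_1 ≥ 1 and n_2 ≥ 1. The number of pairs (f, g) with f : X_1 → X_2 and g : X_2 → X_1 such that some iterate (g ∘ f)^m : X_1 → X_1 is a constant map equals n_1^{n_2−1} · n_2^{n_1−1} · (n_1 + n_2 − 1). -/
open Function Sum

namespace PT

/-! ### Generic finite dynamics -/

section dyn
variable {α : Type*}

open Classical in
/-- minimal time for `π`-iterates of `x` to reach `r` (junk value 0 if never). -/
noncomputable def dd (π : α → α) (r x : α) : ℕ :=
  if h : ∃ k, π^[k] x = r then Nat.find h else 0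

lemma dd_spec {π : α → α} {r x : α} (h : ∃ k, π^[k] x = r) : π^[dd π r x] x = r := by
  classical
  rw [dd, dif_pos h]
  exact Nat.find_spec h

lemma dd_min {π : α → α} {r x : α} (h : ∃ k, π^[k] x = r) {k : ℕ} (hk : k < dd π r x) :
    π^[k] x ≠ r := by
  classical
  rw [dd, dif_pos h] at hk
  exact Nat.find_min h hk

lemma dd_le {π : α → α} {r x : α} {k : ℕ} (hk : π^[k] x = r) : dd π r x ≤ k := by
  classical
  rw [dd, dif_pos ⟨k, hk⟩]
  exact Nat.find_le hk

lemma dd_self {π : α → α} {r : α} : dd π r r = 0 :=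
  Nat.le_zero.mp (dd_le (k := 0) rfl)

lemma dd_pos {π : α → α} {r x : α} (h : ∃ k, π^[k] x = r) (hx : x ≠ r) : 0 < dd π r x := by
  rcases Nat.eq_zero_or_pos (dd π r x) with h0 | h0
  · exact absurd (by simpa [h0] using dd_spec h) hx
  · exact h0

lemma dd_step {π : α → α} {r x : α} (h : ∃ k, π^[k] x = r) (hx : x ≠ r) :
    dd π r (π x) = dd π r x - 1 := by
  have hpos := dd_pos h hx
  have hreach : π^[dd π r x - 1] (π x) = r := by
    rw [← iterate_succ_apply, Nat.succ_eq_add_one, Nat.sub_add_cancel hpos]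
    exact dd_spec h
  refine le_antisymm (dd_le hreach) ?_
  by_contra hlt
  push_neg at hlt
  have h2 : π^[dd π r (π x) + 1] x = r := by
    rw [iterate_succ_apply]
    exact dd_spec ⟨_, hreach⟩
  have := dd_le h2
  omega

lemma dd_iterate {π : α → α} {r x : α} (h : ∃ k, π^[k] x = r) {j : ℕ} (hj : j ≤ dd π r x) :
    dd π r (π^[j] x) = dd π r x - j := by
  induction j with
  | zero => simp
  | succ n ih =>
    have hn : n ≤ dd π r x := by omega
    have hne : π^[n] x ≠ r := dd_min h (by omega)
    have hex : ∃ k, π^[k] (π^[n] x) = r := ⟨dd π r x - n, by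
      rw [← iterate_add_apply, Nat.sub_add_cancel hn]; exact dd_spec h⟩
    rw [iterate_succ_apply', dd_step hex hne, ih hn]
    omega

lemma path_inj {π : α → α} {r x : α} (h : ∃ k, π^[k] x = r) {i j : ℕ}
    (hi : i ≤ dd π r x) (hj : j ≤ dd π r x) (hij : π^[i] x = π^[j] x) : i = j := by
  by_contra hne
  wlog hlt : i < j generalizing i j
  · exact this hj hi hij.symm (Ne.symm hne) (by omega)
  have : π^[dd π r x - j + i] x = r := by
    rw [iterate_add_apply, hij, ← iterate_add_apply, Nat.sub_add_cancel hj]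
    exact dd_spec h
  have := dd_le this
  omega


/-! ### Periodic points -/

section per
variable {α : Type*}

def Per (h : α → α) (z : α) : Prop := ∃ k, 0 < k ∧ h^[k] z = z

lemma Per.map {h : α → α} {z : α} (hz : Per h z) : Per h (h z) := by
  obtain ⟨k, hk, hzk⟩ := hz
  exact ⟨k, hk, by rw [← iterate_succ_apply, iterate_succ_apply', hzk]⟩

lemma Per.iterate {h : α → α} {z : α} (hz : Per h z) (j : ℕ) : Per h (h^[j] z) := by
  induction j with
  | zero => exact hz
  | succ n ih => rw [iterate_succ_apply']; exact ih.map

lemma per_exists_enter [Finite α] (h : α → α) (z : α) : ∃ j, Per h (h^[j] z) := by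
  cases nonempty_fintype α
  obtain ⟨i, j, hij, hmapeq⟩ := Fintype.exists_ne_map_eq_of_card_lt
    (fun i : Fin (Fintype.card α + 1) => h^[(i : ℕ)] z) (by simp)
  rcases lt_or_gt_of_ne (by simpa [Fin.val_ne_iff] using hij : (i:ℕ) ≠ (j:ℕ)) with hlt | hlt
  · exact ⟨i, (j : ℕ) - i, by omega, by
      rw [← iterate_add_apply, Nat.sub_add_cancel hlt.le, ← hmapeq]⟩
  · exact ⟨j, (i : ℕ) - j, by omega, by
      rw [← iterate_add_apply, Nat.sub_add_cancel hlt.le, hmapeq]⟩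

lemma iterate_mul_fix {h : α → α} {z : α} {k : ℕ} (hzk : h^[k] z = z) (m : ℕ) :
    h^[m * k] z = z := by
  induction m with
  | zero => simp
  | succ n ih => rw [Nat.succ_mul, iterate_add_apply, hzk, ih]

lemma Per.inj {h : α → α} {z z' : α} (hz : Per h z) (hz' : Per h z') (he : h z = h z') :
    z = z' := by
  obtain ⟨k, hk, hzk⟩ := hz
  obtain ⟨k', hk', hzk'⟩ := hz'
  have h1 : h^[k' * k] z = z := iterate_mul_fix hzk k'
  have h2 : h^[k' * k] z' = z' := by rw [mul_comm]; exact iterate_mul_fix hzk' k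
  have hpos : 0 < k' * k := Nat.mul_pos hk' hk
  calc z = h^[k' * k] z := h1.symm
    _ = h^[k' * k - 1] (h z) := by rw [← iterate_succ_apply, Nat.succ_eq_add_one,
        Nat.sub_add_cancel hpos]
    _ = h^[k' * k - 1] (h z') := by rw [he]
    _ = h^[k' * k] z' := by rw [← iterate_succ_apply, Nat.succ_eq_add_one,
        Nat.sub_add_cancel hpos]
    _ = z' := h2

lemma Per.pre {h : α → α} {z : α} (hz : Per h z) : ∃ w, Per h w ∧ h w = z := by
  obtain ⟨k, hk, hzk⟩ := hz
  refine ⟨h^[k-1] z, Per.iterate ⟨k, hk, hzk⟩ _, ?_⟩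
  calc h (h^[k-1] z) = h^[k-1+1] z := (iterate_succ_apply' h (k-1) z).symm
    _ = z := by rw [show k-1+1 = k by omega, hzk]

/-- absorption: if everything reaches the fixed point `c`, it does so within `card α` steps. -/
lemma reach_card [Fintype α] {φ : α → α} {c : α} (hc : φ c = c)
    (h : ∀ x, ∃ j, φ^[j] x = c) (x : α) : φ^[Fintype.card α] x = c := by
  have hex := h x
  have hd : dd φ c x ≤ Fintype.card α - 1 := by
    by_contra hgt
    push_neg at hgt
    have hinj : Function.Injective (fun i : Fin (dd φ c x + 1) => φ^[(i:ℕ)] x) := by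
      intro i j hij
      exact Fin.ext (path_inj hex (by omega) (by omega) hij)
    have := Fintype.card_le_of_injective _ hinj
    simp at this
    omega
  have h1 : φ^[dd φ c x] x = c := dd_spec hex
  have hcard : Fintype.card α = (Fintype.card α - dd φ c x) + dd φ c x := by
    have : 0 < Fintype.card α := Fintype.card_pos_iff.mpr ⟨x⟩
    omega
  rw [hcard, iterate_add_apply, h1]
  clear * - hc
  induction (Fintype.card α - dd φ c x) with
  | zero => rfl
  | succ n ih => rw [iterate_succ_apply', ih, hc]

end per

end dyn
/-! ### Bipartite rooted trees as parent maps -/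

section trees
variable {A B : Type*}

noncomputable def getA [Nonempty A] : A ⊕ B → A := Sum.elim id fun _ => Classical.arbitrary A
noncomputable def getB [Nonempty B] : A ⊕ B → B := Sum.elim (fun _ => Classical.arbitrary B) id

@[simp] lemma getA_inl [Nonempty A] (a : A) : getA (B := B) (inl a) = a := rfl
@[simp] lemma getB_inr [Nonempty B] (b : B) : getB (A := A) (inr b) = b := rfl

lemma inl_getA [Nonempty A] {z : A ⊕ B} (h : z.isLeft) : inl (getA z) = z := by
  cases z with
  | inl a => rfl
  | inr b => simp at h

lemma inr_getB [Nonempty B] {z : A ⊕ B} (h : z.isLeft = false) : inr (getB z) = z := by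
  cases z with
  | inl a => simp at h
  | inr b => rfl

/-- `π` is the parent map of a spanning tree of the complete bipartite graph rooted at `r`
(with the convention `π r = r`). -/
def IsTree (r : A ⊕ B) (π : A ⊕ B → A ⊕ B) : Prop :=
  π r = r ∧ (∀ x, x ≠ r → (π x).isLeft = !x.isLeft) ∧ (∀ x, ∃ k, π^[k] x = r)

lemma IsTree.fix {r : A ⊕ B} {π : A ⊕ B → A ⊕ B} (h : IsTree r π) {x : A ⊕ B}
    (hx : π x = x) : x = r := by
  obtain ⟨k, hk⟩ := h.2.2 x
  have : π^[k] x = x := by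
    clear hk; induction k with
    | zero => rfl
    | succ n ih => rw [iterate_succ_apply, hx, ih]
  rw [this] at hk; exact hk

lemma IsTree.root_iterate {r : A ⊕ B} {π : A ⊕ B → A ⊕ B} (h : IsTree r π) (k : ℕ) :
    π^[k] r = r := by
  induction k with
  | zero => rfl
  | succ n ih => rw [iterate_succ_apply, h.1, ih]

lemma IsTree.ne_root_of_lt_dd {r : A ⊕ B} {π : A ⊕ B → A ⊕ B} (h : IsTree r π) {x : A ⊕ B}
    {j : ℕ} (hj : j < dd π r x) : π^[j] x ≠ r := dd_min (h.2.2 x) hj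

/-- sides alternate along a path to the root -/
lemma IsTree.alt {r : A ⊕ B} {π : A ⊕ B → A ⊕ B} (h : IsTree r π) (x : A ⊕ B) {j : ℕ}
    (hj : j ≤ dd π r x) :
    (π^[j] x).isLeft = if Even j then x.isLeft else !x.isLeft := by
  induction j with
  | zero => simp
  | succ n ih =>
    have hne : π^[n] x ≠ r := h.ne_root_of_lt_dd (by omega)
    rw [iterate_succ_apply', h.2.1 _ hne, ih (by omega)]
    rcases Nat.even_or_odd n with he | ho
    · simp [Nat.even_add_one, he]
    · have hne2 : ¬ Even n := Nat.not_even_iff_odd.mpr ho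
      simp [Nat.even_add_one, hne2]

end trees

/-! ### Eventually constant pairs and child-marked rooted trees -/

section evc
variable {A B : Type*} [Fintype A] [Fintype B] [Nonempty A] [Nonempty B]

def phi (f : A → B) (g : B → A) : A → A := fun x => g (f x)

open Classical in
noncomputable def mkTree (f : A → B) (g : B → A) (c : A) : A ⊕ B → A ⊕ B :=
  Sum.elim (fun x => if x = c then inl c else inr (f x)) (fun y => inl (g y))

lemma mkTree_inl_root (f : A → B) (g : B → A) (c : A) : mkTree f g c (inl c) = inl c := by
  simp [mkTree]

lemma mkTree_inl (f : A → B) (g : B → A) {c x : A} (hx : x ≠ c) :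
    mkTree f g c (inl x) = inr (f x) := by
  simp [mkTree, hx]

lemma mkTree_inr (f : A → B) (g : B → A) (c : A) (y : B) :
    mkTree f g c (inr y) = inl (g y) := by
  simp [mkTree]

lemma mkTree_sq (f : A → B) (g : B → A) {c x : A} (hx : x ≠ c) :
    (mkTree f g c)^[2] (inl x) = inl (phi f g x) := by
  show mkTree f g c (mkTree f g c (inl x)) = _
  rw [mkTree_inl f g hx, mkTree_inr]; rfl

lemma mkTree_isTree {f : A → B} {g : B → A} {c : A} (hfix : phi f g c = c)
    (hall : ∀ x, ∃ j, (phi f g)^[j] x = c) : IsTree (inl c) (mkTree f g c) := by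
  have key : ∀ n x, dd (phi f g) c x ≤ n → ∃ k, (mkTree f g c)^[k] (inl x) = inl c := by
    intro n
    induction n with
    | zero =>
      intro x hx
      have : x = c := by
        have := dd_spec (hall x); rw [Nat.le_zero.mp hx] at this; exact this
      exact ⟨0, by rw [this]; rfl⟩
    | succ n ih =>
      intro x hx
      by_cases hc : x = c
      · exact ⟨0, by rw [hc]; rfl⟩
      · have hd : dd (phi f g) c (phi f g x) = dd (phi f g) c x - 1 := dd_step (hall x) hc
        obtain ⟨k, hk⟩ := ih (phi f g x) (by omega)
        exact ⟨k + 2, by rw [iterate_add_apply, mkTree_sq f g hc, hk]⟩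
  refine ⟨mkTree_inl_root f g c, ?_, ?_⟩
  · rintro (x | y) hx
    · rw [mkTree_inl f g (by simpa using hx)]; rfl
    · rw [mkTree_inr]; rfl
  · rintro (x | y)
    · exact key _ x le_rfl
    · obtain ⟨k, hk⟩ := key _ (g y) le_rfl
      exact ⟨k + 1, by rw [iterate_add_apply]; simpa [mkTree_inr] using hk⟩

end evc

section evc2
variable {A B : Type*} [Fintype A] [Fintype B] [Nonempty A] [Nonempty B]

abbrev TreeT (A B : Type*) (r : A ⊕ B) := {π : A ⊕ B → A ⊕ B // IsTree r π}

def ChTree (A B : Type*) := Σ c : A, Σ T : TreeT A B (inl c), {d : B // T.1 (inr d) = inl c}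

omit [Fintype A] [Fintype B] [Nonempty A] [Nonempty B] in
lemma chtree_ext {c c' : A} {π π' : A ⊕ B → A ⊕ B} {d d' : B} {h1 h1' h2 h2'}
    (hc : c = c') (hπ : π = π') (hd : d = d') :
    (⟨c, ⟨π, h1⟩, ⟨d, h2⟩⟩ : ChTree A B) = ⟨c', ⟨π', h1'⟩, ⟨d', h2'⟩⟩ := by
  subst hc; subst hπ; subst hd; rfl

noncomputable def cpt (f : A → B) (g : B → A) : A :=
  (phi f g)^[Fintype.card A] (Classical.arbitrary A)

lemma evc_fix {f : A → B} {g : B → A} (hp : ∃ m c, ∀ x, (phi f g)^[m] x = c) :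
    phi f g (cpt f g) = cpt f g ∧ ∀ x, (phi f g)^[Fintype.card A] x = cpt f g := by
  obtain ⟨m, c, hm⟩ := hp
  have hc : phi f g c = c := by
    have e1 : (phi f g)^[m + 1] c = c := by rw [iterate_succ_apply]; exact hm _
    have e2 : (phi f g)^[m + 1] c = phi f g c := by rw [iterate_succ_apply', hm]
    rw [e2] at e1; exact e1
  have hall : ∀ x, ∃ j, (phi f g)^[j] x = c := fun x => ⟨m, hm x⟩
  have hr := reach_card hc hall
  have hcpt : cpt f g = c := hr _
  rw [hcpt]
  exact ⟨hc, hr⟩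

open Classical in
noncomputable def decF (c : A) (π : A ⊕ B → A ⊕ B) (d : B) : A → B :=
  fun x => if x = c then d else getB (π (inl x))

noncomputable def decG (π : A ⊕ B → A ⊕ B) : B → A := fun y => getA (π (inr y))

variable {c : A} {π : A ⊕ B → A ⊕ B} {d : B}

lemma dec_phi_fix (hπ : IsTree (inl c) π) (hd : π (inr d) = inl c) :
    phi (decF c π d) (decG π) c = c := by
  show decG π (decF c π d c) = c
  rw [decF, if_pos rfl, decG, hd, getA_inl]

lemma dec_pi_eq (hπ : IsTree (inl c) π) (hd : π (inr d) = inl c) :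
    mkTree (decF c π d) (decG π) c = π := by
  funext z
  cases z with
  | inl x =>
    by_cases hx : x = c
    · rw [hx, mkTree_inl_root, hπ.1]
    · rw [mkTree_inl _ _ hx]
      have hside : (π (inl x)).isLeft = false := by
        simpa using hπ.2.1 (inl x) (by simpa using hx)
      rw [decF, if_neg hx, inr_getB hside]
  | inr y =>
    rw [mkTree_inr]
    have hside : (π (inr y)).isLeft = true := by
      simpa using hπ.2.1 (inr y) (by simp)
    rw [decG, inl_getA hside]

lemma dec_reach (hπ : IsTree (inl c) π) (hd : π (inr d) = inl c) :
    ∀ x : A, ∃ j, (phi (decF c π d) (decG π))^[j] x = c := by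
  set F := decF c π d
  set G := decG π
  have hmk := dec_pi_eq hπ hd
  have key : ∀ n x, dd π (inl c) (inl x) ≤ n → ∃ j, (phi F G)^[j] x = c := by
    intro n
    induction n with
    | zero =>
      intro x hx
      have h0 : (inl x : A ⊕ B) = inl c := by
        have := dd_spec (hπ.2.2 (inl x)); rw [Nat.le_zero.mp hx] at this; exact this
      exact ⟨0, by simpa using h0⟩
    | succ n ih =>
      intro x hx
      by_cases hc' : x = c
      · exact ⟨0, hc'⟩
      · have h2le : 2 ≤ dd π (inl c) (inl x) := by
          rcases Nat.lt_or_ge (dd π (inl c) (inl x)) 2 with hlt | hge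
          · exfalso
            interval_cases h : dd π (inl c) (inl x)
            · have := dd_spec (hπ.2.2 (inl x)); rw [h] at this
              exact hc' (by simpa using this)
            · have := dd_spec (hπ.2.2 (inl x)); rw [h] at this
              have hs := hπ.2.1 (inl x) (by simpa using hc')
              rw [show π^[1] (inl x) = π (inl x) from rfl] at this
              rw [this] at hs; simp at hs
          · exact hge
        have hsq : π^[2] (inl x) = inl (phi F G x) := by
          rw [← hmk]; exact mkTree_sq F G hc'
        have hdd : dd π (inl c) (inl (phi F G x)) = dd π (inl c) (inl x) - 2 := by
          rw [← hsq]; exact dd_iterate (hπ.2.2 _) h2le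
        obtain ⟨j, hj⟩ := ih (phi F G x) (by omega)
        exact ⟨j + 1, by rw [iterate_add_apply]; simpa using hj⟩
  exact fun x => key _ x le_rfl

noncomputable def evcEquiv :
    {p : (A → B) × (B → A) // ∃ m c, ∀ x, (p.2 ∘ p.1)^[m] x = c} ≃ ChTree A B where
  toFun q := by
    refine ⟨cpt q.1.1 q.1.2, ⟨mkTree q.1.1 q.1.2 (cpt q.1.1 q.1.2), ?_⟩,
      ⟨q.1.1 (cpt q.1.1 q.1.2), ?_⟩⟩
    · obtain ⟨hfix, hall⟩ := evc_fix (f := q.1.1) (g := q.1.2) q.2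
      exact mkTree_isTree hfix (fun x => ⟨Fintype.card A, hall x⟩)
    · obtain ⟨hfix, _⟩ := evc_fix (f := q.1.1) (g := q.1.2) q.2
      show mkTree q.1.1 q.1.2 (cpt q.1.1 q.1.2) (inr (q.1.1 (cpt q.1.1 q.1.2))) = _
      rw [mkTree_inr]
      exact congrArg inl hfix
  invFun T :=
    ⟨(decF T.1 T.2.1.1 T.2.2.1, decG T.2.1.1), by
      refine ⟨Fintype.card A, T.1, fun x => ?_⟩
      exact reach_card (dec_phi_fix T.2.1.2 T.2.2.2) (dec_reach T.2.1.2 T.2.2.2) x⟩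
  left_inv q := by
    obtain ⟨⟨f, g⟩, hq⟩ := q
    obtain ⟨hfix, hall⟩ := evc_fix (f := f) (g := g) hq
    apply Subtype.ext
    dsimp only
    ext x
    · show decF (cpt f g) (mkTree f g (cpt f g)) (f (cpt f g)) x = f x
      by_cases hx : x = cpt f g
      · rw [decF, if_pos hx, hx]
      · rw [decF, if_neg hx, mkTree_inl f g hx, getB_inr]
    · show decG (mkTree f g (cpt f g)) x = g x
      rw [decG, mkTree_inr, getA_inl]
  right_inv T := by
    obtain ⟨c, ⟨π, hπ⟩, ⟨d, hd⟩⟩ := T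
    have hfix := dec_phi_fix hπ hd
    have hreach := dec_reach hπ hd
    have hc : cpt (decF c π d) (decG π) = c := reach_card hfix hreach _
    refine chtree_ext hc ?_ ?_
    · rw [hc]; exact dec_pi_eq hπ hd
    · rw [hc]; exact if_pos rfl
  
end evc2

/-! ### Rerooting -/

section reroot
variable {A B : Type*}

open Classical in
noncomputable def reroot (π : A ⊕ B → A ⊕ B) (r v : A ⊕ B) : A ⊕ B → A ⊕ B :=
  fun x => if h : ∃ j, j < dd π r v ∧ π^[j+1] v = x then π^[Nat.find h] v
    else if x = v then v else π x

variable {π : A ⊕ B → A ⊕ B} {r v : A ⊕ B}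

lemma reroot_path (hT : IsTree r π) {j : ℕ} (hj : j < dd π r v) :
    reroot π r v (π^[j+1] v) = π^[j] v := by
  classical
  have h : ∃ i, i < dd π r v ∧ π^[i+1] v = π^[j+1] v := ⟨j, hj, rfl⟩
  rw [reroot, dif_pos h]
  have hspec := Nat.find_spec h
  have : Nat.find h + 1 = j + 1 :=
    path_inj (hT.2.2 v) (by omega) (by omega) hspec.2
  rw [show Nat.find h = j by omega]

lemma reroot_self (hT : IsTree r π) : reroot π r v v = v := by
  classical
  have h : ¬ ∃ i, i < dd π r v ∧ π^[i+1] v = v := by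
    rintro ⟨i, hi, hiv⟩
    have : i + 1 = 0 := path_inj (hT.2.2 v) (by omega) (by omega) (by simpa using hiv)
    omega
  rw [reroot, dif_neg h, if_pos rfl]

lemma reroot_off (hT : IsTree r π) {x : A ⊕ B} (hx : ∀ j, j ≤ dd π r v → π^[j] v ≠ x) :
    reroot π r v x = π x := by
  classical
  have h : ¬ ∃ i, i < dd π r v ∧ π^[i+1] v = x := by
    rintro ⟨i, hi, hiv⟩; exact hx (i+1) (by omega) hiv
  rw [reroot, dif_neg h, if_neg (fun hv => hx 0 (by omega) hv.symm)]

lemma step_side (hT : IsTree r π) {j : ℕ} (hj : j < dd π r v) :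
    (π^[j+1] v).isLeft = !(π^[j] v).isLeft := by
  rw [iterate_succ_apply']
  exact hT.2.1 _ (hT.ne_root_of_lt_dd hj)

lemma reroot_isTree (hT : IsTree r π) (v : A ⊕ B) : IsTree v (reroot π r v) := by
  have hreach := hT.2.2 v
  refine ⟨reroot_self hT, ?_, ?_⟩
  · intro x hx
    by_cases hp : ∃ j, j ≤ dd π r v ∧ π^[j] v = x
    · obtain ⟨j, hj, hjx⟩ := hp
      have hj0 : j ≠ 0 := by rintro rfl; exact hx (by simpa using hjx.symm)
      obtain ⟨i, rfl⟩ : ∃ i, j = i + 1 := ⟨j - 1, by omega⟩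
      rw [← hjx, reroot_path hT (by omega)]
      have := step_side hT (v := v) (j := i) (by omega)
      rw [this]; simp
    · push_neg at hp
      rw [reroot_off hT hp]
      have hxr : x ≠ r := by
        intro hxr
        exact hp (dd π r v) le_rfl (by rw [dd_spec hreach, hxr])
      exact hT.2.1 x hxr
  · -- reachability
    have back : ∀ j, j ≤ dd π r v → (reroot π r v)^[j] (π^[j] v) = v := by
      intro j
      induction j with
      | zero => intro _; rfl
      | succ n ih =>
        intro hn
        rw [iterate_succ_apply, reroot_path hT (by omega)]
        exact ih (by omega)
    have key : ∀ n x, dd π r x ≤ n → ∃ k, (reroot π r v)^[k] x = v := by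
      intro n
      induction n with
      | zero =>
        intro x hx
        have hxr : x = r := by
          have := dd_spec (hT.2.2 x); rw [Nat.le_zero.mp hx] at this; exact this
        refine ⟨dd π r v, ?_⟩
        rw [hxr]
        have hb := back _ le_rfl
        rw [dd_spec hreach] at hb
        exact hb
      | succ n ih =>
        intro x hx
        by_cases hp : ∃ j, j ≤ dd π r v ∧ π^[j] v = x
        · obtain ⟨j, hj, hjx⟩ := hp
          exact ⟨j, by rw [← hjx]; exact back _ hj⟩
        · push_neg at hp
          have hxr : x ≠ r := by
            intro hxr
            exact hp (dd π r v) le_rfl (by rw [dd_spec hreach, hxr])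
          have h1 : dd π r (π x) = dd π r x - 1 := dd_step (hT.2.2 x) hxr
          have h0 : 0 < dd π r x := dd_pos (hT.2.2 x) hxr
          obtain ⟨k, hk⟩ := ih (π x) (by omega)
          exact ⟨k + 1, by rw [iterate_add_apply, iterate_one, reroot_off hT hp]; exact hk⟩
    exact fun x => key _ x le_rfl

lemma edge_sub {x y : A ⊕ B} (hxy : x ≠ y) (hxyv : reroot π r v x = y) :
    π x = y ∨ π y = x := by
  classical
  by_cases h : ∃ j, j < dd π r v ∧ π^[j+1] v = x
  · rw [reroot, dif_pos h] at hxyv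
    right
    rw [← hxyv, ← iterate_succ_apply' π (Nat.find h) v]
    exact (Nat.find_spec h).2
  · rw [reroot, dif_neg h] at hxyv
    by_cases hv : x = v
    · rw [if_pos hv] at hxyv; exact absurd (hv.trans hxyv) hxy
    · rw [if_neg hv] at hxyv; exact Or.inl hxyv

lemma tree_ext {π π' : A ⊕ B → A ⊕ B} (hπ : IsTree r π) (hπ' : IsTree r π')
    (hsub : ∀ x y, x ≠ y → π' x = y → π x = y ∨ π y = x) : π' = π := by
  funext x
  have key : ∀ n x, dd π' r x ≤ n → π' x = π x := by
    intro n
    induction n with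
    | zero =>
      intro x hx
      have hxr : x = r := by
        have := dd_spec (hπ'.2.2 x); rw [Nat.le_zero.mp hx] at this; exact this
      rw [hxr, hπ.1, hπ'.1]
    | succ n ih =>
      intro x hx
      by_cases hxr : x = r
      · rw [hxr, hπ.1, hπ'.1]
      · set y := π' x with hy
        have hyx : x ≠ y := by
          intro he; exact hxr (hπ'.fix he.symm)
        rcases hsub x y hyx rfl with h1 | h2
        · rw [h1]
        · -- π y = x; derive contradiction
          exfalso
          have hyr : y ≠ r := by
            intro hyr; rw [hyr] at h2; rw [hπ.1] at h2; exact hxr h2.symm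
          have hdy : dd π' r y = dd π' r x - 1 := by rw [hy]; exact dd_step (hπ'.2.2 x) hxr
          have h0 : 0 < dd π' r x := dd_pos (hπ'.2.2 x) hxr
          have hπy : π' y = π y := ih y (by omega)
          have hcyc : π'^[2] x = x := by
            show π' (π' x) = x
            rw [← hy, hπy, h2]
          have hall := iterate_mul_fix hcyc
          have hD := dd_spec (hπ'.2.2 x)
          set D := dd π' r x with hDdef
          have : π'^[D * 2] x = x := hall D
          have h2D : π'^[D * 2] x = r := by
            rw [show D * 2 = (D * 2 - D) + D by omega, iterate_add_apply, hD]
            exact hπ'.root_iterate _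
          rw [this] at h2D
          exact hxr h2D
  exact key _ x le_rfl

lemma reroot_reroot (hT : IsTree r π) (v : A ⊕ B) :
    reroot (reroot π r v) v r = π := by
  have hρ := reroot_isTree hT v
  have hπ₂ := reroot_isTree hρ r
  refine tree_ext hT hπ₂ ?_
  intro x y hxy hx
  rcases edge_sub hxy hx with h1 | h2
  · exact edge_sub hxy h1
  · rcases edge_sub (Ne.symm hxy) h2 with h3 | h4
    · exact Or.inr h3
    · exact Or.inl h4

lemma edge_iff (hT : IsTree r π) (v : A ⊕ B) {x y : A ⊕ B} (hxy : x ≠ y) :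
    (reroot π r v x = y ∨ reroot π r v y = x) ↔ (π x = y ∨ π y = x) := by
  constructor
  · rintro (h | h)
    · exact edge_sub hxy h
    · rcases edge_sub (Ne.symm hxy) h with h1 | h2
      · exact Or.inr h1
      · exact Or.inl h2
  · intro h
    have hrr := reroot_reroot hT v
    rw [← hrr] at h
    rcases h with h | h
    · rcases edge_sub hxy h with h1 | h2
      · exact Or.inl h1
      · exact Or.inr h2
    · rcases edge_sub (Ne.symm hxy) h with h1 | h2
      · exact Or.inr h1
      · exact Or.inl h2

noncomputable def rerootEquiv (r v : A ⊕ B) : TreeT A B r ≃ TreeT A B v where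
  toFun T := ⟨reroot T.1 r v, reroot_isTree T.2 v⟩
  invFun S := ⟨reroot S.1 v r, reroot_isTree S.2 r⟩
  left_inv T := Subtype.ext (reroot_reroot T.2 v)
  right_inv S := Subtype.ext (reroot_reroot S.2 r)

end reroot

/-! ### Edges -/

section edges
variable {A B : Type*} [Nonempty A] [Nonempty B]

/-- oriented edges of the tree `π` whose target is on the `A` side -/
def E1 (π : A ⊕ B → A ⊕ B) : Type _ :=
  {e : (A ⊕ B) × (A ⊕ B) // e.2.isLeft = true ∧ e.1 ≠ e.2 ∧ (π e.1 = e.2 ∨ π e.2 = e.1)}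

variable {π : A ⊕ B → A ⊕ B} {r : A ⊕ B}

lemma no_two_cycle (hT : IsTree r π) {x : A ⊕ B} (h : π (π x) = x) : x = r := by
  have hcyc : π^[2] x = x := h
  have hall := iterate_mul_fix hcyc
  have hD := dd_spec (hT.2.2 x)
  set D := dd π r x with hDdef
  have h1 : π^[D * 2] x = x := hall D
  have h2 : π^[D * 2] x = r := by
    rw [show D * 2 = (D * 2 - D) + D by omega, iterate_add_apply, hD]
    exact hT.root_iterate _
  rw [h1] at h2; exact h2

lemma uw_side (hT : IsTree r π) {u w : A ⊕ B} (hw : w.isLeft = true) (hne : u ≠ w)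
    (hor : π u = w ∨ π w = u) : u.isLeft = false := by
  rcases hor with h | h
  · have hur : u ≠ r := by
      rintro rfl; rw [hT.1] at h; exact hne h
    have := hT.2.1 u hur
    rw [h, hw] at this
    simpa using this.symm
  · have hwr : w ≠ r := by
      rintro rfl; rw [hT.1] at h; exact hne h.symm
    have := hT.2.1 w hwr
    rw [h, hw] at this
    simpa using this

lemma child_eq (hT : IsTree r π) {u w : A ⊕ B} (hne : u ≠ w)
    (hor : π u = w ∨ π w = u) : reroot π r w u = w := by
  rcases (edge_iff hT w hne).mpr hor with h | h
  · exact h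
  · rw [reroot_self hT] at h
    exact absurd h.symm hne

/-- the edges with `A`-side target are in bijection with the non-root vertices -/
noncomputable def e1Equiv (hT : IsTree r π) : E1 π ≃ {x : A ⊕ B // x ≠ r} where
  toFun e := by
    classical
    exact if h : π e.1.1 = e.1.2 then
      ⟨e.1.1, by rintro rfl; rw [hT.1] at h; exact e.2.2.1 h⟩
    else
      ⟨e.1.2, by
        have h2 : π e.1.2 = e.1.1 := (e.2.2.2).resolve_left h
        rintro rfl; rw [hT.1] at h2; exact e.2.2.1 h2.symm⟩
  invFun x := by
    classical
    exact if h : (π x.1).isLeft = true then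
      ⟨(x.1, π x.1), h, fun he => x.2 (hT.fix he.symm), Or.inl rfl⟩
    else
      ⟨(π x.1, x.1), by
        have h2 := hT.2.1 x.1 x.2
        show x.1.isLeft = true
        cases hx : x.1.isLeft with
        | true => rfl
        | false => rw [hx] at h2; simp at h2; exact absurd h2 h,
        fun he => x.2 (hT.fix he), Or.inr rfl⟩
  left_inv e := by
    classical
    obtain ⟨⟨u, w⟩, hw, hne, hor⟩ := e
    dsimp only
    by_cases h : π u = w
    · rw [dif_pos h]
      have hl : (π u).isLeft = true := by rw [h]; exact hw
      dsimp only
      erw [dif_pos hl]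
      exact Subtype.ext (by simp [h])
    · have h2 : π w = u := hor.resolve_left h
      rw [dif_neg h]
      have hus : u.isLeft = false := uw_side hT hw hne hor
      have hl : ¬ ((π w).isLeft = true) := by rw [h2, hus]; simp
      dsimp only
      erw [dif_neg hl]
      exact Subtype.ext (by simp [h2])
  right_inv x := by
    classical
    obtain ⟨x, hx⟩ := x
    dsimp only
    by_cases h : (π x).isLeft = true
    · erw [dif_pos h]
      dsimp only
      rw [dif_pos rfl]
    · erw [dif_neg h]
      have hno : ¬ (π (π x) = x) := fun hc => hx (no_two_cycle hT hc)
      dsimp only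
      rw [dif_neg hno]

end edges

/-! ### The Ψ bijection -/

section psi
variable {A B : Type*} [Nonempty A] [Nonempty B]

def MTree (A B : Type*) := Σ r : A ⊕ B, Σ T : TreeT A B r, E1 T.1

lemma mtree_ext {r : A ⊕ B} {π π' : A ⊕ B → A ⊕ B} {e e' : (A ⊕ B) × (A ⊕ B)}
    {h1 h1' h2 h2'} (hπ : π = π') (he : e = e') :
    (⟨r, ⟨π, h1⟩, ⟨e, h2⟩⟩ : MTree A B) = ⟨r, ⟨π', h1'⟩, ⟨e', h2'⟩⟩ := by
  subst hπ; subst he; rfl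

lemma mtree_ext' {x y : MTree A B} (h0 : x.1 = y.1) (h1 : x.2.1.1 = y.2.1.1)
    (h2 : x.2.2.1 = y.2.2.1) : x = y := by
  obtain ⟨r, ⟨π, hπ⟩, ⟨e, he⟩⟩ := x
  obtain ⟨r', ⟨π', hπ'⟩, ⟨e', he'⟩⟩ := y
  dsimp only at h0 h1 h2
  subst h0; subst h1; subst h2
  rfl

lemma chtree_ext' {x y : ChTree A B} (h0 : x.1 = y.1) (h1 : x.2.1.1 = y.2.1.1)
    (h2 : x.2.2.1 = y.2.2.1) : x = y := by
  obtain ⟨c, ⟨π, hπ⟩, ⟨d, hd⟩⟩ := x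
  obtain ⟨c', ⟨π', hπ'⟩, ⟨d', hd'⟩⟩ := y
  dsimp only at h0 h1 h2
  subst h0; subst h1; subst h2
  rfl

variable {π : A ⊕ B → A ⊕ B} {r : A ⊕ B}

lemma psi_pf1 (hT : IsTree r π) {w : A ⊕ B} (hw : w.isLeft = true) :
    IsTree (inl (getA w) : A ⊕ B) (reroot π r w) := by
  rw [inl_getA hw]
  exact reroot_isTree hT w

lemma psi_pf2 (hT : IsTree r π) {u w : A ⊕ B} (hw : w.isLeft = true) (hne : u ≠ w)
    (hor : π u = w ∨ π w = u) :
    reroot π r w (inr (getB u)) = inl (getA w) := by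
  rw [inr_getB (uw_side hT hw hne hor), inl_getA hw]
  exact child_eq hT hne hor

noncomputable def psiEquiv : MTree A B ≃ ChTree A B × (A ⊕ B) where
  toFun x :=
    (⟨getA x.2.2.1.2,
      ⟨reroot x.2.1.1 x.1 x.2.2.1.2, psi_pf1 x.2.1.2 x.2.2.2.1⟩,
      ⟨getB x.2.2.1.1, psi_pf2 x.2.1.2 x.2.2.2.1 x.2.2.2.2.1 x.2.2.2.2.2⟩⟩, x.1)
  invFun y :=
    ⟨y.2, ⟨reroot y.1.2.1.1 (inl y.1.1) y.2, reroot_isTree y.1.2.1.2 y.2⟩,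
      ⟨(inr y.1.2.2.1, inl y.1.1), by simp,
        by simp,
        (edge_iff y.1.2.1.2 y.2 (by simp)).mpr (Or.inl y.1.2.2.2)⟩⟩
  left_inv x := by
    obtain ⟨r, ⟨π, hπ⟩, ⟨⟨u, w⟩, hw, hne, hor⟩⟩ := x
    dsimp only
    apply mtree_ext'
    · rfl
    · show reroot (reroot π r w) (inl (getA w)) r = π
      rw [inl_getA hw]
      exact reroot_reroot hπ w
    · show (inr (getB u), inl (getA w)) = (u, w)
      rw [inr_getB (uw_side hπ hw hne hor), inl_getA hw]
  right_inv y := by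
    obtain ⟨⟨c, ⟨π, hπ⟩, ⟨d, hd⟩⟩, r⟩ := y
    dsimp only
    apply Prod.ext
    · apply chtree_ext'
      · show getA (inl c : A ⊕ B) = c; simp
      · show reroot (reroot π (inl c) r) r (inl (getA (inl c : A ⊕ B))) = π
        rw [getA_inl]
        exact reroot_reroot hπ r
      · show getB (inr d : A ⊕ B) = d; simp
    · rfl

end psi

/-! ### Joyal: setup -/

section joyal
variable {A B : Type*} [Fintype A] [Fintype B] [LinearOrder A] [Nonempty A] [Nonempty B]

/-- the combined dynamics of a pair `(f,g)` -/
def hh (f : A → B) (g : B → A) : A ⊕ B → A ⊕ B :=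
  Sum.elim (fun a => inr (f a)) (fun b => inl (g b))

lemma hh_inl (f : A → B) (g : B → A) (a : A) : hh f g (inl a) = inr (f a) := rfl
lemma hh_inr (f : A → B) (g : B → A) (b : B) : hh f g (inr b) = inl (g b) := rfl

lemma hh_sq (f : A → B) (g : B → A) (a : A) : (hh f g)^[2] (inl a) = inl (phi f g a) := rfl

lemma hh_iter (f : A → B) (g : B → A) (m : ℕ) (a : A) :
    (hh f g)^[2*m] (inl a) = inl ((phi f g)^[m] a) := by
  induction m with
  | zero => rfl
  | succ n ih =>
    rw [show 2*(n+1) = 2 + 2*n by ring, iterate_add_apply, ih, hh_sq,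
      ← iterate_succ_apply' (phi f g) n a]

open Classical in
noncomputable def P1 (f : A → B) (g : B → A) : Finset A :=
  Finset.univ.filter (fun a => Per (hh f g) (inl a))

lemma mem_P1 {f : A → B} {g : B → A} {a : A} : a ∈ P1 f g ↔ Per (hh f g) (inl a) := by
  classical
  rw [P1]
  simp only [Finset.mem_filter, Finset.mem_univ, true_and]

lemma P1_nonempty (f : A → B) (g : B → A) : (P1 f g).Nonempty := by
  obtain ⟨j, hj⟩ := per_exists_enter (hh f g) (inl (Classical.arbitrary A))
  cases hz : (hh f g)^[j] (inl (Classical.arbitrary A)) with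
  | inl a =>
    exact ⟨a, mem_P1.mpr (by rw [← hz]; exact hj)⟩
  | inr b =>
    refine ⟨g b, mem_P1.mpr ?_⟩
    have := hj.map
    rw [hz, hh_inr] at this
    exact this

lemma phi_mem_P1 {f : A → B} {g : B → A} {a : A} (ha : a ∈ P1 f g) : phi f g a ∈ P1 f g := by
  rw [mem_P1] at ha ⊢
  have := ha.map.map
  rwa [show hh f g (hh f g (inl a)) = inl (phi f g a) from rfl] at this

lemma phi_injOn_P1 {f : A → B} {g : B → A} {a a' : A} (ha : a ∈ P1 f g) (ha' : a' ∈ P1 f g)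
    (h : phi f g a = phi f g a') : a = a' := by
  rw [mem_P1] at ha ha'
  have h2 : hh f g (hh f g (inl a)) = hh f g (hh f g (inl a')) := by
    show (inl (phi f g a) : A ⊕ B) = inl (phi f g a')
    rw [h]
  have h1 : hh f g (inl a) = hh f g (inl a') := (ha.map).inj (ha'.map) h2
  have h0 : (inl a : A ⊕ B) = inl a' := ha.inj ha' h1
  simpa using h0

lemma P1_image (f : A → B) (g : B → A) : (P1 f g).image (phi f g) = P1 f g := by
  classical
  apply Finset.eq_of_subset_of_card_le
  · intro a ha
    obtain ⟨a', ha', rfl⟩ := Finset.mem_image.mp ha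
    exact phi_mem_P1 ha'
  · rw [Finset.card_image_of_injOn (fun x hx y hy => phi_injOn_P1 hx hy)]

/-- the `i`-th element of a finset in sorted order (junk for out of range) -/
noncomputable def ppF (S : Finset A) (i : ℕ) : A :=
  if h : i < S.card then (S.orderIsoOfFin rfl ⟨i, h⟩ : A) else Classical.arbitrary A

lemma ppF_mem {S : Finset A} {i : ℕ} (hi : i < S.card) : ppF S i ∈ S := by
  rw [ppF, dif_pos hi]
  exact (S.orderIsoOfFin rfl ⟨i, hi⟩).2

lemma ppF_inj {S : Finset A} {i j : ℕ} (hi : i < S.card) (hj : j < S.card)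
    (h : ppF S i = ppF S j) : i = j := by
  simp only [ppF, dif_pos hi, dif_pos hj] at h
  have := (S.orderIsoOfFin rfl).injective (Subtype.ext h)
  simpa [Fin.ext_iff] using this

lemma ppF_surj {S : Finset A} {a : A} (ha : a ∈ S) : ∃ i, i < S.card ∧ ppF S i = a := by
  obtain ⟨i, hi⟩ := (S.orderIsoOfFin rfl).surjective ⟨a, ha⟩
  exact ⟨i.1, i.2, by rw [ppF, dif_pos i.2]; exact congrArg Subtype.val hi⟩

open Classical in
/-- position of `a` in the sorted order of `S` -/
noncomputable def sidx (S : Finset A) (a : A) : ℕ :=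
  if h : ∃ i, i < S.card ∧ ppF S i = a then Nat.find h else 0

lemma sidx_spec {S : Finset A} {a : A} (ha : a ∈ S) :
    sidx S a < S.card ∧ ppF S (sidx S a) = a := by
  classical
  have h := ppF_surj ha
  rw [sidx, dif_pos h]
  exact Nat.find_spec h

lemma sidx_ppF {S : Finset A} {i : ℕ} (hi : i < S.card) : sidx S (ppF S i) = i := by
  have hm := ppF_mem hi
  obtain ⟨h1, h2⟩ := sidx_spec hm
  exact ppF_inj h1 hi h2

noncomputable def aseq (f : A → B) (g : B → A) (i : ℕ) : A := phi f g (ppF (P1 f g) i)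

lemma aseq_mem {f : A → B} {g : B → A} {i : ℕ} (hi : i < (P1 f g).card) :
    aseq f g i ∈ P1 f g := phi_mem_P1 (ppF_mem hi)

lemma aseq_inj {f : A → B} {g : B → A} {i j : ℕ} (hi : i < (P1 f g).card)
    (hj : j < (P1 f g).card) (h : aseq f g i = aseq f g j) : i = j :=
  ppF_inj hi hj (phi_injOn_P1 (ppF_mem hi) (ppF_mem hj) h)

lemma aseq_surj {f : A → B} {g : B → A} {a : A} (ha : a ∈ P1 f g) :
    ∃ i, i < (P1 f g).card ∧ aseq f g i = a := by
  have : a ∈ (P1 f g).image (phi f g) := by rw [P1_image]; exact ha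
  obtain ⟨a', ha', h⟩ := Finset.mem_image.mp this
  obtain ⟨i, hi, hp⟩ := ppF_surj ha'
  exact ⟨i, hi, by rw [aseq, hp, h]⟩

open Classical in
noncomputable def idx (f : A → B) (g : B → A) (a : A) : ℕ :=
  if h : ∃ i, i < (P1 f g).card ∧ aseq f g i = a then Nat.find h else 0

lemma idx_spec {f : A → B} {g : B → A} {a : A} (ha : a ∈ P1 f g) :
    idx f g a < (P1 f g).card ∧ aseq f g (idx f g a) = a := by
  classical
  have h := aseq_surj ha
  rw [idx, dif_pos h]
  exact Nat.find_spec h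

lemma idx_aseq {f : A → B} {g : B → A} {i : ℕ} (hi : i < (P1 f g).card) :
    idx f g (aseq f g i) = i := by
  obtain ⟨h1, h2⟩ := idx_spec (aseq_mem hi)
  exact aseq_inj h1 hi h2

end joyal

section joyal2
variable {A B : Type*} [Fintype A] [Fintype B] [LinearOrder A] [Nonempty A] [Nonempty B]

open Classical in
noncomputable def encT (f : A → B) (g : B → A) : A ⊕ B → A ⊕ B :=
  Sum.elim (fun a => if a ∈ P1 f g then
      (if idx f g a = 0 then inl a else inr (f (ppF (P1 f g) (idx f g a - 1))))
    else inr (f a)) (fun b => inl (g b))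

variable {f : A → B} {g : B → A}

lemma encT_inr (b : B) : encT f g (inr b) = inl (g b) := rfl

lemma encT_out {a : A} (ha : a ∉ P1 f g) : encT f g (inl a) = inr (f a) := by
  classical
  show (if a ∈ P1 f g then _ else inr (f a)) = inr (f a)
  rw [if_neg ha]

lemma encT_root (hk : 0 < (P1 f g).card) :
    encT f g (inl (aseq f g 0)) = inl (aseq f g 0) := by
  classical
  show (if aseq f g 0 ∈ P1 f g then _ else _) = _
  rw [if_pos (aseq_mem hk), if_pos (idx_aseq hk)]

lemma encT_aseq_pos {i : ℕ} (h0 : 0 < i) (hi : i < (P1 f g).card) :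
    encT f g (inl (aseq f g i)) = inr (f (ppF (P1 f g) (i - 1))) := by
  classical
  show (if aseq f g i ∈ P1 f g then _ else _) = _
  rw [if_pos (aseq_mem hi), idx_aseq hi, if_neg (by omega)]

noncomputable def vmark (f : A → B) (g : B → A) : B :=
  f (ppF (P1 f g) ((P1 f g).card - 1))

lemma spine (j : ℕ) (hj : j ≤ (P1 f g).card - 1) :
    (encT f g)^[2*j] (inr (vmark f g)) = inr (f (ppF (P1 f g) ((P1 f g).card - 1 - j)))
    ∧ (encT f g)^[2*j+1] (inr (vmark f g)) = inl (aseq f g ((P1 f g).card - 1 - j)) := by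
  induction j with
  | zero =>
    constructor
    · rw [Nat.mul_zero, iterate_zero_apply, vmark, Nat.sub_zero]
    · rw [Nat.mul_zero, Nat.zero_add, iterate_one, vmark, Nat.sub_zero]
      exact encT_inr _
  | succ n ih =>
    obtain ⟨ihe, iho⟩ := ih (by omega)
    have he : (encT f g)^[2*(n+1)] (inr (vmark f g))
        = inr (f (ppF (P1 f g) ((P1 f g).card - 1 - (n+1)))) := by
      rw [show 2*(n+1) = 1 + (2*n+1) by ring, iterate_add_apply, iterate_one, iho]
      rw [encT_aseq_pos (by omega) (by omega)]
      congr 2 <;> omega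
    refine ⟨he, ?_⟩
    rw [show 2*(n+1)+1 = 1 + 2*(n+1) by ring, iterate_add_apply, iterate_one, he]
    exact encT_inr _

lemma card_P1_pos : 0 < (P1 f g).card := Finset.card_pos.mpr (P1_nonempty f g)

lemma reach_spine {i : ℕ} (hi : i < (P1 f g).card) :
    (encT f g)^[2*i] (inl (aseq f g i)) = inl (aseq f g 0) := by
  have hk := card_P1_pos (f := f) (g := g)
  have h1 := (spine (f := f) (g := g) ((P1 f g).card - 1 - i) (by omega)).2
  have h2 := (spine (f := f) (g := g) ((P1 f g).card - 1) le_rfl).2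
  rw [show (P1 f g).card - 1 - ((P1 f g).card - 1 - i) = i by omega] at h1
  rw [Nat.sub_self] at h2
  rw [← h1, ← iterate_add_apply]
  rw [show 2*i + (2*((P1 f g).card - 1 - i)+1) = 2*((P1 f g).card - 1)+1 by omega]
  exact h2

lemma per_B {b : B} (hb : Per (hh f g) (inr b)) :
    ∃ i, i < (P1 f g).card ∧ b = f (ppF (P1 f g) i) := by
  obtain ⟨w, hw, hwb⟩ := hb.pre
  cases w with
  | inr b' => rw [hh_inr] at hwb; exact absurd hwb (by simp)
  | inl a =>
    rw [hh_inl] at hwb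
    have ha : a ∈ P1 f g := mem_P1.mpr hw
    obtain ⟨i, hi, hpi⟩ := ppF_surj ha
    refine ⟨i, hi, ?_⟩
    rw [hpi]
    exact (Sum.inr.injEq _ _ ▸ hwb).symm

lemma encT_eq_hh {z : A ⊕ B} (hz : ∀ a, z = inl a → a ∉ P1 f g) :
    encT f g z = hh f g z := by
  cases z with
  | inl a => rw [encT_out (hz a rfl), hh_inl]
  | inr b => rw [encT_inr, hh_inr]

open Classical in
noncomputable def ent (f : A → B) (g : B → A) (z : A ⊕ B) : ℕ :=
  Nat.find (per_exists_enter (hh f g) z)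

lemma ent_eq_zero {z : A ⊕ B} (hz : Per (hh f g) z) : ent f g z = 0 := by
  classical
  rw [ent, Nat.find_eq_zero]
  exact hz

lemma ent_pos {z : A ⊕ B} (hz : ¬ Per (hh f g) z) : 0 < ent f g z := by
  classical
  rcases Nat.eq_zero_or_pos (ent f g z) with h0 | h0
  · exfalso
    have := Nat.find_spec (per_exists_enter (hh f g) z)
    rw [ent] at h0
    rw [h0] at this
    exact hz this
  · exact h0

lemma ent_step {z : A ⊕ B} (hz : ¬ Per (hh f g) z) :
    ent f g (hh f g z) = ent f g z - 1 := by
  classical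
  have hpos := ent_pos hz
  have hle : ent f g (hh f g z) ≤ ent f g z - 1 := by
    rw [ent]
    apply Nat.find_le
    rw [← iterate_succ_apply, Nat.succ_eq_add_one, Nat.sub_add_cancel hpos]
    exact Nat.find_spec (per_exists_enter (hh f g) z)
  have hge : ent f g z ≤ ent f g (hh f g z) + 1 := by
    rw [ent]
    apply Nat.find_le
    rw [iterate_add_apply, iterate_one]
    exact Nat.find_spec (per_exists_enter (hh f g) (hh f g z))
  omega

lemma enc_reach : ∀ z, ∃ m, (encT f g)^[m] z = inl (aseq f g 0) := by
  have key : ∀ n z, ent f g z ≤ n → ∃ m, (encT f g)^[m] z = inl (aseq f g 0) := by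
    intro n
    induction n with
    | zero =>
      intro z hz0
      have hper : Per (hh f g) z := by
        classical
        have := Nat.find_spec (per_exists_enter (hh f g) z)
        rw [show Nat.find (per_exists_enter (hh f g) z) = 0 from by
          have := ent_pos (f := f) (g := g) (z := z); rw [ent] at *; omega] at this
        exact this
      cases z with
      | inl a =>
        have ha : a ∈ P1 f g := mem_P1.mpr hper
        obtain ⟨i, hi, rfl⟩ := aseq_surj ha
        exact ⟨2*i, reach_spine hi⟩
      | inr b =>
        obtain ⟨i, hi, rfl⟩ := per_B hper
        refine ⟨2*i + 1, ?_⟩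
        rw [show 2*i+1 = 2*i + 1 from rfl, iterate_add_apply, iterate_one, encT_inr]
        exact reach_spine hi
    | succ n ih =>
      intro z hz
      by_cases hper : Per (hh f g) z
      · cases z with
        | inl a =>
          have ha : a ∈ P1 f g := mem_P1.mpr hper
          obtain ⟨i, hi, rfl⟩ := aseq_surj ha
          exact ⟨2*i, reach_spine hi⟩
        | inr b =>
          obtain ⟨i, hi, rfl⟩ := per_B hper
          refine ⟨2*i + 1, ?_⟩
          rw [iterate_add_apply, iterate_one, encT_inr]
          exact reach_spine hi
      · have hoff : ∀ a, z = inl a → a ∉ P1 f g := by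
          rintro a rfl ha
          exact hper (mem_P1.mp ha)
        have h1 : ent f g (hh f g z) = ent f g z - 1 := ent_step hper
        have h2 : 0 < ent f g z := ent_pos hper
        obtain ⟨m, hm⟩ := ih (hh f g z) (by omega)
        refine ⟨m + 1, ?_⟩
        rw [iterate_add_apply, iterate_one, encT_eq_hh hoff]
        exact hm
  exact fun z => key (ent f g z) z le_rfl

lemma enc_isTree : IsTree (inl (aseq f g 0)) (encT f g) := by
  refine ⟨encT_root card_P1_pos, ?_, enc_reach⟩
  rintro (a | b) hx
  · by_cases ha : a ∈ P1 f g
    · obtain ⟨i, hi, rfl⟩ := aseq_surj ha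
      have hi0 : 0 < i := by
        rcases Nat.eq_zero_or_pos i with rfl | h
        · exact absurd rfl hx
        · exact h
      rw [encT_aseq_pos hi0 hi]
      rfl
    · rw [encT_out ha]; rfl
  · rw [encT_inr]; rfl

end joyal2

section joyal3
variable {A B : Type*} [Fintype A] [Fintype B] [LinearOrder A] [Nonempty A] [Nonempty B]

noncomputable def LL (π : A ⊕ B → A ⊕ B) (u : A) (v : B) : ℕ := dd π (inl u) (inr v)

noncomputable def kd (π : A ⊕ B → A ⊕ B) (u : A) (v : B) : ℕ := (LL π u v + 1) / 2

noncomputable def pathV (π : A ⊕ B → A ⊕ B) (v : B) (j : ℕ) : A ⊕ B := π^[j] (inr v)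

noncomputable def aseq' (π : A ⊕ B → A ⊕ B) (u : A) (v : B) (i : ℕ) : A :=
  getA (pathV π v (2*(kd π u v - 1 - i)+1))

noncomputable def yseq' (π : A ⊕ B → A ⊕ B) (u : A) (v : B) (i : ℕ) : B :=
  getB (pathV π v (2*(kd π u v - 1 - i)))

noncomputable def P1' (π : A ⊕ B → A ⊕ B) (u : A) (v : B) : Finset A :=
  (Finset.range (kd π u v)).image (aseq' π u v)

noncomputable def decFd (π : A ⊕ B → A ⊕ B) (u : A) (v : B) : A → B := fun a =>
  if a ∈ P1' π u v then yseq' π u v (sidx (P1' π u v) a) else getB (π (inl a))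

noncomputable def decGd (π : A ⊕ B → A ⊕ B) : B → A := fun b => getA (π (inr b))

variable {π : A ⊕ B → A ⊕ B} {u : A} {v : B}

lemma pathV_succ (j : ℕ) : pathV π v (j+1) = π (pathV π v j) := iterate_succ_apply' _ _ _

lemma L_odd (hπ : IsTree (inl u) π) :
    LL π u v = 2*(kd π u v - 1) + 1 ∧ 1 ≤ kd π u v := by
  have hs := dd_spec (hπ.2.2 (inr v))
  have halt := hπ.alt (inr v) (le_refl (dd π (inl u) (inr v)))
  rw [hs] at halt
  by_cases he : Even (dd π (inl u) (inr v))
  · rw [if_pos he] at halt; simp at halt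
  · rw [if_neg he] at halt
    rw [Nat.not_even_iff_odd] at he
    obtain ⟨m, hm⟩ := he
    constructor
    · show LL π u v = _
      rw [kd, LL, hm]
      omega
    · rw [kd, LL, hm]
      omega

lemma pathV_spec (hπ : IsTree (inl u) π) : pathV π v (LL π u v) = inl u :=
  dd_spec (hπ.2.2 (inr v))

lemma pathV_left (hπ : IsTree (inl u) π) {j : ℕ} (hj : j ≤ LL π u v) :
    (pathV π v j).isLeft = if Even j then false else true := by
  have halt := hπ.alt (inr v) (j := j) hj
  rw [show (inr v : A ⊕ B).isLeft = false from rfl] at halt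
  exact halt.trans (by cases Nat.even_or_odd j with
    | inl h => rw [if_pos h, if_pos h]
    | inr h => have := Nat.not_even_iff_odd.mpr h; rw [if_neg this, if_neg this]; rfl)

lemma inl_aseq' (hπ : IsTree (inl u) π) {i : ℕ} (hi : i < kd π u v) :
    inl (aseq' π u v i) = pathV π v (2*(kd π u v - 1 - i)+1) := by
  obtain ⟨hL, hk⟩ := L_odd (v := v) hπ
  apply inl_getA
  rw [pathV_left hπ (by omega)]
  rw [if_neg (by simp [Nat.even_add_one, Nat.even_mul])]

lemma inr_yseq' (hπ : IsTree (inl u) π) {i : ℕ} (hi : i < kd π u v) :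
    inr (yseq' π u v i) = pathV π v (2*(kd π u v - 1 - i)) := by
  obtain ⟨hL, hk⟩ := L_odd (v := v) hπ
  apply inr_getB
  rw [pathV_left hπ (by omega)]
  rw [if_pos (by simp [Nat.even_mul])]

lemma aseq'_injOn (hπ : IsTree (inl u) π) {i i' : ℕ} (hi : i < kd π u v) (hi' : i' < kd π u v)
    (h : aseq' π u v i = aseq' π u v i') : i = i' := by
  obtain ⟨hL, hk⟩ := L_odd (v := v) hπ
  have hL' : dd π (inl u) (inr v) = 2*(kd π u v - 1) + 1 := hL
  have h2 : pathV π v (2*(kd π u v - 1 - i)+1) = pathV π v (2*(kd π u v - 1 - i')+1) := by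
    rw [← inl_aseq' hπ hi, ← inl_aseq' hπ hi', h]
  have := path_inj (hπ.2.2 (inr v)) (i := 2*(kd π u v - 1 - i)+1)
    (j := 2*(kd π u v - 1 - i')+1) (by show _ ≤ dd π (inl u) (inr v); omega)
    (by show _ ≤ dd π (inl u) (inr v); omega) h2
  omega

lemma card_P1' (hπ : IsTree (inl u) π) : (P1' π u v).card = kd π u v := by
  classical
  rw [P1', Finset.card_image_of_injOn, Finset.card_range]
  intro i hi i' hi' h
  exact aseq'_injOn hπ (Finset.mem_range.mp hi) (Finset.mem_range.mp hi') h

lemma mem_P1' {a : A} : a ∈ P1' π u v ↔ ∃ i, i < kd π u v ∧ aseq' π u v i = a := by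
  classical
  rw [P1']
  simp only [Finset.mem_image, Finset.mem_range]

lemma aseq'_zero (hπ : IsTree (inl u) π) : aseq' π u v 0 = u := by
  obtain ⟨hL, hk⟩ := L_odd (v := v) hπ
  have : inl (aseq' π u v 0) = pathV π v (2*(kd π u v - 1 - 0)+1) := inl_aseq' hπ (by omega)
  rw [Nat.sub_zero, ← hL, pathV_spec hπ] at this
  simpa using this

lemma u_mem_P1' (hπ : IsTree (inl u) π) : u ∈ P1' π u v := by
  obtain ⟨hL, hk⟩ := L_odd (v := v) hπ
  exact mem_P1'.mpr ⟨0, by omega, aseq'_zero hπ⟩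

lemma yseq'_last (hπ : IsTree (inl u) π) : yseq' π u v (kd π u v - 1) = v := by
  rw [yseq', Nat.sub_self]
  rfl

lemma pi_yseq' (hπ : IsTree (inl u) π) {i : ℕ} (hi : i < kd π u v) :
    π (inr (yseq' π u v i)) = inl (aseq' π u v i) := by
  rw [inr_yseq' hπ hi, inl_aseq' hπ hi]
  exact (pathV_succ _).symm

lemma pi_aseq' (hπ : IsTree (inl u) π) {i : ℕ} (h0 : 0 < i) (hi : i < kd π u v) :
    π (inl (aseq' π u v i)) = inr (yseq' π u v (i-1)) := by
  rw [inl_aseq' hπ hi, inr_yseq' hπ (by omega)]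
  rw [show 2*(kd π u v - 1 - (i-1)) = (2*(kd π u v - 1 - i)+1)+1 by omega]
  exact (pathV_succ _).symm

lemma Fd_pp (hπ : IsTree (inl u) π) {i : ℕ} (hi : i < kd π u v) :
    decFd π u v (ppF (P1' π u v) i) = yseq' π u v i := by
  have hc := card_P1' (v := v) hπ
  have hmem : ppF (P1' π u v) i ∈ P1' π u v := ppF_mem (by omega)
  rw [decFd, if_pos hmem, sidx_ppF (by omega)]

lemma Gd_yseq (hπ : IsTree (inl u) π) {i : ℕ} (hi : i < kd π u v) :
    decGd π (yseq' π u v i) = aseq' π u v i := by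
  rw [decGd, pi_yseq' hπ hi, getA_inl]

/-- membership in the spine -/
def SvP (π : A ⊕ B → A ⊕ B) (u : A) (v : B) (z : A ⊕ B) : Prop :=
  (∃ a, z = inl a ∧ a ∈ P1' π u v) ∨ (∃ i, i < kd π u v ∧ z = inr (yseq' π u v i))

lemma sv_closed (hπ : IsTree (inl u) π) {z : A ⊕ B} (hz : SvP π u v z) :
    SvP π u v (hh (decFd π u v) (decGd π) z) := by
  rcases hz with ⟨a, rfl, ha⟩ | ⟨i, hi, rfl⟩
  · rw [hh_inl]
    have hc := card_P1' (v := v) hπ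
    have hs := sidx_spec ha
    right
    refine ⟨sidx (P1' π u v) a, by omega, ?_⟩
    rw [decFd, if_pos ha]
  · rw [hh_inr, Gd_yseq hπ hi]
    exact Or.inl ⟨_, rfl, mem_P1'.mpr ⟨i, hi, rfl⟩⟩

lemma sv_closed_iter (hπ : IsTree (inl u) π) {z : A ⊕ B} (hz : SvP π u v z) (j : ℕ) :
    SvP π u v ((hh (decFd π u v) (decGd π))^[j] z) := by
  induction j with
  | zero => exact hz
  | succ n ih => rw [iterate_succ_apply']; exact sv_closed hπ ih

lemma hd_eq_pi_off (hπ : IsTree (inl u) π) {z : A ⊕ B} (hz : ¬ SvP π u v z) :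
    hh (decFd π u v) (decGd π) z = π z := by
  cases z with
  | inl a =>
    have ha : a ∉ P1' π u v := fun h => hz (Or.inl ⟨a, rfl, h⟩)
    have hau : a ≠ u := fun h => ha (by rw [h]; exact u_mem_P1' hπ)
    rw [hh_inl, decFd, if_neg ha]
    have hside : (π (inl a)).isLeft = false := by
      simpa using hπ.2.1 (inl a) (by simpa using hau)
    rw [inr_getB hside]
  | inr b =>
    rw [hh_inr, decGd]
    have hside : (π (inr b)).isLeft = true := by
      simpa using hπ.2.1 (inr b) (by simp)
    rw [inl_getA hside]

lemma enter_sv (hπ : IsTree (inl u) π) :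
    ∀ z, ∃ j, SvP π u v ((hh (decFd π u v) (decGd π))^[j] z) := by
  have key : ∀ n z, dd π (inl u) z ≤ n →
      ∃ j, SvP π u v ((hh (decFd π u v) (decGd π))^[j] z) := by
    intro n
    induction n with
    | zero =>
      intro z hz
      have hzr : z = inl u := by
        have := dd_spec (hπ.2.2 z); rw [Nat.le_zero.mp hz] at this; exact this
      exact ⟨0, by rw [iterate_zero_apply, hzr]; exact Or.inl ⟨u, rfl, u_mem_P1' hπ⟩⟩
    | succ n ih =>
      intro z hz
      by_cases hsv : SvP π u v z
      · exact ⟨0, by rw [iterate_zero_apply]; exact hsv⟩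
      · have hzr : z ≠ inl u := by
          rintro rfl; exact hsv (Or.inl ⟨u, rfl, u_mem_P1' hπ⟩)
        have h1 : dd π (inl u) (π z) = dd π (inl u) z - 1 := dd_step (hπ.2.2 z) hzr
        have h2 : 0 < dd π (inl u) z := dd_pos (hπ.2.2 z) hzr
        obtain ⟨j, hj⟩ := ih (π z) (by omega)
        refine ⟨j + 1, ?_⟩
        rw [iterate_add_apply, iterate_one, hd_eq_pi_off hπ hsv]
        exact hj
  exact fun z => key _ z le_rfl

lemma per_sv (hπ : IsTree (inl u) π) {z : A ⊕ B}
    (hz : Per (hh (decFd π u v) (decGd π)) z) : SvP π u v z := by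
  obtain ⟨j, hj⟩ := enter_sv (v := v) hπ z
  obtain ⟨n, hn0, hnz⟩ := hz
  have hall := iterate_mul_fix hnz
  have hjn : j ≤ j * n := Nat.le_mul_of_pos_right j hn0
  have h1 : (hh (decFd π u v) (decGd π))^[j*n] z = z := hall j
  have h2 : (hh (decFd π u v) (decGd π))^[j*n] z
      = (hh (decFd π u v) (decGd π))^[j*n - j] ((hh (decFd π u v) (decGd π))^[j] z) := by
    rw [← iterate_add_apply]
    congr 1
    omega
  rw [h1] at h2
  rw [h2]
  exact sv_closed_iter hπ hj _

lemma finset_per {S : Finset A} {σ : A → A} (hmaps : ∀ a ∈ S, σ a ∈ S)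
    (hinj : ∀ a ∈ S, ∀ b ∈ S, σ a = σ b → a = b) {a : A} (ha : a ∈ S) :
    ∃ n, 0 < n ∧ σ^[n] a = a := by
  classical
  have hiter : ∀ j, σ^[j] a ∈ S := by
    intro j
    induction j with
    | zero => exact ha
    | succ n ih => rw [iterate_succ_apply']; exact hmaps _ ih
  have hpeel : ∀ i, ∀ x ∈ S, ∀ y ∈ S, σ^[i] x = σ^[i] y → x = y := by
    intro i
    induction i with
    | zero => intro x _ y _ h; exact h
    | succ n ih =>
      intro x hx y hy h
      rw [iterate_succ_apply, iterate_succ_apply] at h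
      exact hinj x hx y hy (ih _ (hmaps _ hx) _ (hmaps _ hy) h)
  obtain ⟨i, j, hij, hmapeq⟩ := Fintype.exists_ne_map_eq_of_card_lt
    (fun i : Fin (S.card + 1) => (⟨σ^[(i:ℕ)] a, hiter _⟩ : {x // x ∈ S}))
    (by simp [Fintype.card_coe])
  have hv : σ^[(i:ℕ)] a = σ^[(j:ℕ)] a := congrArg Subtype.val hmapeq
  rcases lt_or_gt_of_ne (by simpa [Fin.val_ne_iff] using hij : (i:ℕ) ≠ (j:ℕ)) with hlt | hlt
  · refine ⟨(j:ℕ) - i, by omega, ?_⟩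
    apply hpeel i _ (hiter _) _ ha
    rw [← iterate_add_apply]
    rw [show (i:ℕ) + ((j:ℕ) - (i:ℕ)) = (j:ℕ) by omega]
    exact hv.symm
  · refine ⟨(i:ℕ) - j, by omega, ?_⟩
    apply hpeel j _ (hiter _) _ ha
    rw [← iterate_add_apply]
    rw [show (j:ℕ) + ((i:ℕ) - (j:ℕ)) = (i:ℕ) by omega]
    exact hv

lemma P1_dec_eq (hπ : IsTree (inl u) π) : P1 (decFd π u v) (decGd π) = P1' π u v := by
  ext a
  rw [mem_P1]
  constructor
  · intro hper
    rcases per_sv hπ hper with ⟨a', he, ha'⟩ | ⟨i, hi, he⟩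
    · rwa [show a = a' from by simpa using he]
    · exact absurd he (by simp)
  · intro ha
    have hc := card_P1' (v := v) hπ
    have hmaps : ∀ x ∈ P1' π u v, phi (decFd π u v) (decGd π) x ∈ P1' π u v := by
      intro x hx
      obtain ⟨hs1, hs2⟩ := sidx_spec hx
      rw [← hs2, show phi (decFd π u v) (decGd π) (ppF (P1' π u v) (sidx (P1' π u v) x))
        = decGd π (decFd π u v (ppF (P1' π u v) (sidx (P1' π u v) x))) from rfl]
      rw [Fd_pp hπ (by omega), Gd_yseq hπ (by omega)]
      exact mem_P1'.mpr ⟨_, by omega, rfl⟩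
    have hinj : ∀ x ∈ P1' π u v, ∀ y ∈ P1' π u v,
        phi (decFd π u v) (decGd π) x = phi (decFd π u v) (decGd π) y → x = y := by
      intro x hx y hy hxy
      obtain ⟨hs1, hs2⟩ := sidx_spec hx
      obtain ⟨ht1, ht2⟩ := sidx_spec hy
      rw [← hs2, ← ht2] at hxy ⊢
      have e1 : phi (decFd π u v) (decGd π) (ppF (P1' π u v) (sidx (P1' π u v) x))
          = aseq' π u v (sidx (P1' π u v) x) := by
        show decGd π (decFd π u v _) = _
        rw [Fd_pp hπ (by omega), Gd_yseq hπ (by omega)]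
      have e2 : phi (decFd π u v) (decGd π) (ppF (P1' π u v) (sidx (P1' π u v) y))
          = aseq' π u v (sidx (P1' π u v) y) := by
        show decGd π (decFd π u v _) = _
        rw [Fd_pp hπ (by omega), Gd_yseq hπ (by omega)]
      rw [e1, e2] at hxy
      rw [aseq'_injOn hπ (by omega) (by omega) hxy]
    obtain ⟨n, hn0, hn⟩ := finset_per hmaps hinj ha
    exact ⟨2*n, by omega, by rw [hh_iter, hn]⟩

end joyal3

section joyal4
variable {A B : Type*} [Fintype A] [Fintype B] [LinearOrder A] [Nonempty A] [Nonempty B]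

variable {π : A ⊕ B → A ⊕ B} {u : A} {v : B}

lemma kk_dec (hπ : IsTree (inl u) π) :
    (P1 (decFd π u v) (decGd π)).card = kd π u v := by
  rw [P1_dec_eq hπ, card_P1' hπ]

lemma aseq_dec (hπ : IsTree (inl u) π) {i : ℕ} (hi : i < kd π u v) :
    aseq (decFd π u v) (decGd π) i = aseq' π u v i := by
  rw [aseq, P1_dec_eq hπ]
  show decGd π (decFd π u v (ppF (P1' π u v) i)) = _
  rw [Fd_pp hπ hi, Gd_yseq hπ hi]

lemma u_dec (hπ : IsTree (inl u) π) : aseq (decFd π u v) (decGd π) 0 = u := by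
  obtain ⟨hL, hk⟩ := L_odd (v := v) hπ
  rw [aseq_dec hπ (by omega)]
  exact aseq'_zero hπ

lemma v_dec (hπ : IsTree (inl u) π) : vmark (decFd π u v) (decGd π) = v := by
  obtain ⟨hL, hk⟩ := L_odd (v := v) hπ
  rw [vmark, P1_dec_eq hπ, card_P1' hπ, Fd_pp hπ (by omega), yseq'_last hπ]

lemma encT_dec (hπ : IsTree (inl u) π) : encT (decFd π u v) (decGd π) = π := by
  obtain ⟨hL, hk⟩ := L_odd (v := v) hπ
  funext z
  cases z with
  | inr b =>
    rw [encT_inr]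
    show inl (getA (π (inr b))) = π (inr b)
    exact inl_getA (by simpa using hπ.2.1 (inr b) (by simp))
  | inl a =>
    by_cases ha : a ∈ P1 (decFd π u v) (decGd π)
    · obtain ⟨i, hi, hia⟩ := aseq_surj ha
      have hik : i < kd π u v := by rw [kk_dec hπ] at hi; exact hi
      rcases Nat.eq_zero_or_pos i with rfl | hi0
      · rw [← hia, encT_root (by rw [kk_dec hπ]; omega)]
        rw [aseq_dec hπ hik, aseq'_zero hπ, hπ.1]
      · rw [← hia, encT_aseq_pos hi0 hi, aseq_dec hπ hik, pi_aseq' hπ hi0 hik]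
        rw [P1_dec_eq hπ, Fd_pp hπ (by omega)]
    · rw [encT_out ha]
      rw [P1_dec_eq hπ] at ha
      have hau : a ≠ u := fun h => ha (by rw [h]; exact u_mem_P1' hπ)
      show inr (decFd π u v a) = π (inl a)
      rw [decFd, if_neg ha]
      exact inr_getB (by simpa using hπ.2.1 (inl a) (by simpa using hau))

variable {f : A → B} {g : B → A}

lemma enc_dd :
    dd (encT f g) (inl (aseq f g 0)) (inr (vmark f g)) = 2*((P1 f g).card - 1)+1 := by
  have hk := card_P1_pos (f := f) (g := g)
  have hub : (encT f g)^[2*((P1 f g).card - 1)+1] (inr (vmark f g)) = inl (aseq f g 0) := by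
    have := (spine (f := f) (g := g) ((P1 f g).card - 1) le_rfl).2
    rwa [Nat.sub_self] at this
  apply le_antisymm (dd_le hub)
  by_contra hlt
  push_neg at hlt
  set D := dd (encT f g) (inl (aseq f g 0)) (inr (vmark f g)) with hD
  have hspec : (encT f g)^[D] (inr (vmark f g)) = inl (aseq f g 0) :=
    dd_spec ⟨_, hub⟩
  rcases Nat.even_or_odd D with ⟨j, hj⟩ | ⟨j, hj⟩
  · have hj2 : j ≤ (P1 f g).card - 1 := by omega
    have := (spine (f := f) (g := g) j hj2).1
    rw [show 2*j = D by omega, hspec] at this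
    exact absurd this.symm (by simp)
  · have hj2 : j < (P1 f g).card - 1 := by omega
    have := (spine (f := f) (g := g) j (by omega)).2
    rw [show 2*j+1 = D by omega, hspec] at this
    have h0 := aseq_inj (f := f) (g := g) (i := 0) (j := (P1 f g).card - 1 - j)
      (by omega) (by omega) (by simpa using this)
    omega

lemma enc_kd : kd (encT f g) (aseq f g 0) (vmark f g) = (P1 f g).card := by
  have hk := card_P1_pos (f := f) (g := g)
  have h := enc_dd (f := f) (g := g)
  rw [kd]
  show (dd (encT f g) (inl (aseq f g 0)) (inr (vmark f g)) + 1) / 2 = _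
  rw [h]
  omega

lemma enc_aseq' {i : ℕ} (hi : i < (P1 f g).card) :
    aseq' (encT f g) (aseq f g 0) (vmark f g) i = aseq f g i := by
  have hk := card_P1_pos (f := f) (g := g)
  rw [aseq', enc_kd]
  have := (spine (f := f) (g := g) ((P1 f g).card - 1 - i) (by omega)).2
  rw [show (P1 f g).card - 1 - ((P1 f g).card - 1 - i) = i by omega] at this
  show getA ((encT f g)^[2*((P1 f g).card - 1 - i)+1] (inr (vmark f g))) = _
  rw [this, getA_inl]

lemma enc_yseq' {i : ℕ} (hi : i < (P1 f g).card) :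
    yseq' (encT f g) (aseq f g 0) (vmark f g) i = f (ppF (P1 f g) i) := by
  have hk := card_P1_pos (f := f) (g := g)
  rw [yseq', enc_kd]
  have := (spine (f := f) (g := g) ((P1 f g).card - 1 - i) (by omega)).1
  rw [show (P1 f g).card - 1 - ((P1 f g).card - 1 - i) = i by omega] at this
  show getB ((encT f g)^[2*((P1 f g).card - 1 - i)] (inr (vmark f g))) = _
  rw [this, getB_inr]

lemma enc_P1' : P1' (encT f g) (aseq f g 0) (vmark f g) = P1 f g := by
  ext a
  rw [mem_P1']
  constructor
  · rintro ⟨i, hi, rfl⟩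
    rw [enc_kd] at hi
    rw [enc_aseq' hi]
    exact aseq_mem hi
  · intro ha
    obtain ⟨i, hi, hia⟩ := aseq_surj ha
    exact ⟨i, by rw [enc_kd]; exact hi, by rw [enc_aseq' hi]; exact hia⟩

lemma Fd_enc : decFd (encT f g) (aseq f g 0) (vmark f g) = f := by
  funext a
  show (if a ∈ P1' (encT f g) (aseq f g 0) (vmark f g) then
      yseq' _ _ _ (sidx (P1' (encT f g) (aseq f g 0) (vmark f g)) a)
    else getB (encT f g (inl a))) = f a
  rw [enc_P1']
  by_cases ha : a ∈ P1 f g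
  · rw [if_pos ha]
    obtain ⟨h1, h2⟩ := sidx_spec ha
    rw [enc_yseq' h1, h2]
  · rw [if_neg ha, encT_out ha, getB_inr]

lemma Gd_enc : decGd (encT f g) = g := by
  funext b
  rw [decGd, encT_inr, getA_inl]

def JT (A B : Type*) := Σ u : A, TreeT A B (inl u) × B

omit [Fintype A] [Fintype B] [LinearOrder A] [Nonempty A] [Nonempty B] in
lemma jt_ext {x y : JT A B} (h0 : x.1 = y.1) (h1 : x.2.1.1 = y.2.1.1)
    (h2 : x.2.2 = y.2.2) : x = y := by
  obtain ⟨ux, ⟨πx, hx⟩, vx⟩ := x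
  obtain ⟨uy, ⟨πy, hy⟩, vy⟩ := y
  dsimp only at h0 h1 h2
  subst h0; subst h1; subst h2
  rfl

noncomputable def joyalEquiv : ((A → B) × (B → A)) ≃ JT A B where
  toFun p := ⟨aseq p.1 p.2 0, ⟨encT p.1 p.2, enc_isTree⟩, vmark p.1 p.2⟩
  invFun T := (decFd T.2.1.1 T.1 T.2.2, decGd T.2.1.1)
  left_inv p := by
    obtain ⟨f, g⟩ := p
    dsimp only
    exact Prod.ext (Fd_enc (f := f) (g := g)) (Gd_enc (f := f) (g := g))
  right_inv T := by
    obtain ⟨u, ⟨π, hπ⟩, v⟩ := T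
    dsimp only
    apply jt_ext
    · exact u_dec hπ
    · exact encT_dec hπ
    · exact v_dec hπ

end joyal4

/-! ### Counting -/

section count
variable {A B : Type*} [Fintype A] [Fintype B] [LinearOrder A] [Nonempty A] [Nonempty B]

noncomputable def neEquiv (a b : A ⊕ B) : {x : A ⊕ B // x ≠ a} ≃ {x : A ⊕ B // x ≠ b} := by
  classical
  refine Equiv.subtypeEquiv (Equiv.swap a b) (fun x => not_congr ?_)
  constructor
  · intro h; rw [h]; exact Equiv.swap_apply_left a b
  · intro h
    have := congrArg (Equiv.swap a b) h
    simpa using this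

noncomputable def mtreeEquiv (r₀ : A ⊕ B) :
    MTree A B ≃ (A ⊕ B) × (TreeT A B r₀ × {x : A ⊕ B // x ≠ r₀}) := by
  classical
  refine (Equiv.sigmaCongrRight (fun r => ?_)).trans (Equiv.sigmaEquivProd _ _)
  exact ((Equiv.sigmaCongrRight (fun T => e1Equiv T.2)).trans
    (Equiv.sigmaEquivProd _ _)).trans
    (Equiv.prodCongr (rerootEquiv r r₀) (neEquiv r r₀))

noncomputable def jtEquiv (r₀ : A ⊕ B) : JT A B ≃ A × (TreeT A B r₀ × B) :=
  (Equiv.sigmaCongrRight (fun u =>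
    Equiv.prodCongr (rerootEquiv (inl u) r₀) (Equiv.refl B))).trans
    (Equiv.sigmaEquivProd _ _)

lemma card_ne (r₀ : A ⊕ B) : Nat.card {x : A ⊕ B // x ≠ r₀} = Nat.card (A ⊕ B) - 1 := by
  classical
  simp [Nat.card_eq_fintype_card]

lemma count_chtree (r₀ : A ⊕ B) :
    Nat.card (ChTree A B) * Nat.card (A ⊕ B)
      = Nat.card (A ⊕ B) * (Nat.card (TreeT A B r₀) * (Nat.card (A ⊕ B) - 1)) := by
  have h1 : Nat.card (MTree A B) = Nat.card (ChTree A B) * Nat.card (A ⊕ B) := by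
    rw [Nat.card_congr (psiEquiv (A := A) (B := B)), Nat.card_prod]
  have h2 : Nat.card (MTree A B)
      = Nat.card (A ⊕ B) * (Nat.card (TreeT A B r₀) * (Nat.card (A ⊕ B) - 1)) := by
    rw [Nat.card_congr (mtreeEquiv r₀), Nat.card_prod, Nat.card_prod, card_ne]
  rw [← h1, h2]

lemma count_jt (r₀ : A ⊕ B) :
    Nat.card B ^ Nat.card A * Nat.card A ^ Nat.card B
      = Nat.card A * (Nat.card (TreeT A B r₀) * Nat.card B) := by
  have h1 : Nat.card ((A → B) × (B → A))
      = Nat.card B ^ Nat.card A * Nat.card A ^ Nat.card B := by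
    rw [Nat.card_prod, Nat.card_fun, Nat.card_fun]
  rw [← h1, Nat.card_congr (joyalEquiv (A := A) (B := B)),
    Nat.card_congr (jtEquiv r₀), Nat.card_prod, Nat.card_prod]

end count

end PT

open Sum in
/-- For disjoint finite sets `X₁, X₂` of cardinalities `n₁, n₂ ≥ 1`, the number of
eventually constant pairs `(f, g)` (pairs `f : X₁ → X₂`, `g : X₂ → X₁` such that some
iterate `(g ∘ f)^[m]` is a constant map) equals `n₁^(n₂−1) · n₂^(n₁−1) · (n₁+n₂−1)`. -/
theorem stmt18 (X₁ X₂ : Type*) [Fintype X₁] [Fintype X₂] (n₁ n₂ : ℕ)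
    (h₁ : Fintype.card X₁ = n₁) (h₂ : Fintype.card X₂ = n₂)
    (hn₁ : 1 ≤ n₁) (hn₂ : 1 ≤ n₂) :
    Nat.card {p : (X₁ → X₂) × (X₂ → X₁) //
        ∃ (m : ℕ) (c : X₁), ∀ x : X₁, (p.2 ∘ p.1)^[m] x = c} =
      n₁ ^ (n₂ - 1) * n₂ ^ (n₁ - 1) * (n₁ + n₂ - 1) := by
  classical
  haveI : Nonempty X₁ := Fintype.card_pos_iff.mp (by omega)
  haveI : Nonempty X₂ := Fintype.card_pos_iff.mp (by omega)
  letI : LinearOrder X₁ := LinearOrder.lift' (fun x => (Fintype.equivFin X₁ x : ℕ))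
    (fun x y h => (Fintype.equivFin X₁).injective (Fin.ext h))
  set r₀ : X₁ ⊕ X₂ := Sum.inl (Classical.arbitrary X₁) with hr₀
  set R := Nat.card (PT.TreeT X₁ X₂ r₀) with hR
  have hcA : Nat.card X₁ = n₁ := by rw [Nat.card_eq_fintype_card, h₁]
  have hcB : Nat.card X₂ = n₂ := by rw [Nat.card_eq_fintype_card, h₂]
  have hcV : Nat.card (X₁ ⊕ X₂) = n₁ + n₂ := by rw [Nat.card_sum, hcA, hcB]
  have hjt := PT.count_jt (A := X₁) (B := X₂) r₀
  rw [hcA, hcB, ← hR] at hjt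
  have hRval : R = n₁ ^ (n₂ - 1) * n₂ ^ (n₁ - 1) := by
    obtain ⟨m, rfl⟩ : ∃ m, n₁ = m + 1 := ⟨n₁ - 1, by omega⟩
    obtain ⟨l, rfl⟩ : ∃ l, n₂ = l + 1 := ⟨n₂ - 1, by omega⟩
    have he : (l+1) ^ (m+1) * (m+1) ^ (l+1)
        = (m+1) * (((m+1) ^ l * (l+1) ^ m) * (l+1)) := by ring
    rw [he] at hjt
    have h1 := Nat.eq_of_mul_eq_mul_left (by omega : 0 < m + 1) hjt
    have h2 := Nat.eq_of_mul_eq_mul_right (by omega : 0 < l + 1) h1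
    simpa using h2.symm
  have hch := PT.count_chtree (A := X₁) (B := X₂) r₀
  rw [hcV, ← hR] at hch
  have hNpos : 0 < n₁ + n₂ := by omega
  have hChval : Nat.card (PT.ChTree X₁ X₂) = R * (n₁ + n₂ - 1) := by
    rw [mul_comm (Nat.card (PT.ChTree X₁ X₂)) (n₁+n₂)] at hch
    exact Nat.eq_of_mul_eq_mul_left hNpos hch
  rw [Nat.card_congr (PT.evcEquiv (A := X₁) (B := X₂)), hChval, hRval]
end

section
/- Let X_1, X_2, X_3 be pairwise disjoint finite sets of cardinalities n_1, n_2, n_3 ≥ 1. The number of triples (f, g, h) with f : X_1 → X_2, g : X_2 → X_3, h : X_3 → X_1 such that some iterate (h ∘ g ∘ f)^m : X_1 → X_1 is a constant map equals n_1^{n_3−1} · n_2^{n_1−1} · n_3^{n_2−1} · (n_1 n_2 + n_2 n_3 + n_3 n_1 − (n_1 + n_2 + n_3) + 1). -/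
/-!
An eventually constant triple has exactly one periodic orbit, and it is a 3-cycle
`c = (c₁, c₂, c₃)` of `(f, g, h)`. There are `n₂^(n₁-1) n₃^(n₂-1) n₁^(n₃-1)` triples through a
given `c`; such a triple fails to be eventually constant iff `ψ = g ∘ f ∘ h` has a periodic point
`m ≠ c₃`. Choosing `m` canonically from the set of these points and swapping the values of `h` at
`m` and `ψ m` makes `ψ m` a fixed point of the new `ψ`, i.e. splits off a second 3-cycle disjoint
from `c`. The swap exchanges two periodic points, so it leaves the periodic points of `ψ`, hence
the choice of `m`, unchanged and is undone by swapping again. This identifies the triples through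
`c` that are not eventually constant with the triples through `c` and a second, disjoint,
prescribed 3-cycle, of which there are `(n₁-1)(n₂-1)(n₃-1) n₂^(n₁-2) n₃^(n₂-2) n₁^(n₃-2)`.
Summing over the `n₁ n₂ n₃` choices of `c` gives the formula.
-/

open Function

section PeriodicPts

open Set

variable {α : Type*} {f : α → α}

def HasConstIterate (f : α → α) : Prop := ∃ (m : ℕ) (c : α), ∀ x, f^[m] x = c

lemma Set.Finite.subset_periodicPts {s : Set α} (hs : s.Finite) (hmaps : MapsTo f s s)
    (hinj : InjOn f s) : s ⊆ periodicPts f := by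
  have := hs.to_subtype
  intro x hx
  have hval : Semiconj Subtype.val hmaps.restrict f := fun _ => rfl
  exact hval.mapsTo_periodicPts ((hmaps.restrict_inj.mpr hinj).mem_periodicPts ⟨x, hx⟩)

lemma Function.IsFixedPt.mem_periodicPts {x : α} (hx : IsFixedPt f x) : x ∈ periodicPts f :=
  mk_mem_periodicPts one_pos (hx.isPeriodicPt 1)

lemma exists_forall_iterate_mem_periodicPts [Finite α] (f : α → α) :
    ∃ n, ∀ x, f^[n] x ∈ periodicPts f := by
  have hreach : ∀ x, ∃ k, f^[k] x ∈ periodicPts f := by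
    intro x
    obtain ⟨i, j, hij, heq⟩ := Finite.exists_ne_map_eq_of_infinite (fun n : ℕ => f^[n] x)
    wlog hlt : i < j generalizing i j
    · exact this j i hij.symm heq.symm (by omega)
    refine ⟨i, mk_mem_periodicPts (n := j - i) (by omega) ?_⟩
    simp only [IsPeriodicPt, IsFixedPt, ← iterate_add_apply, Nat.sub_add_cancel hlt.le]
    exact heq.symm
  choose k hk using hreach
  obtain ⟨n, hn⟩ := (Set.finite_range k).bddAbove
  refine ⟨n, fun x => ?_⟩
  have hkn : k x ≤ n := hn (mem_range_self x)
  rw [← Nat.sub_add_cancel hkn, iterate_add_apply]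
  exact (bijOn_periodicPts f).mapsTo.iterate _ (hk x)

lemma hasConstIterate_iff_periodicPts_subset [Finite α] {c : α} (hc : IsFixedPt f c) :
    HasConstIterate f ↔ periodicPts f ⊆ {c} := by
  constructor
  · rintro ⟨m, c', hm⟩
    suffices ∀ x ∈ periodicPts f, x = c' by
      intro x hx
      rw [mem_singleton_iff, this x hx, this c hc.mem_periodicPts]
    rintro x ⟨n, hn, hx⟩
    calc x = f^[m * n] x := ((hx.const_mul m).eq).symm
      _ = f^[m] (f^[m * (n - 1)] x) := by
        rw [← iterate_add_apply, Nat.add_comm, ← Nat.mul_add_one, Nat.sub_add_cancel hn]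
      _ = c' := hm _
  · intro hsub
    obtain ⟨n, hn⟩ := exists_forall_iterate_mem_periodicPts f
    exact ⟨n, c, fun x => hsub (hn x)⟩

lemma periodicPts_subset_periodicPts_comp_swap [Finite α] [DecidableEq α] {a b : α}
    (ha : a ∈ periodicPts f) (hb : b ∈ periodicPts f) :
    periodicPts f ⊆ periodicPts (f ∘ Equiv.swap a b) := by
  have hswap : MapsTo (Equiv.swap a b) (periodicPts f) (periodicPts f) := by
    intro x hx
    rw [Equiv.swap_apply_def]
    split_ifs <;> assumption
  refine (toFinite _).subset_periodicPts ((bijOn_periodicPts f).mapsTo.comp hswap) ?_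
  exact (bijOn_periodicPts f).injOn.comp (Equiv.injective _).injOn hswap

lemma periodicPts_comp_swap [Finite α] [DecidableEq α] {a b : α}
    (ha : a ∈ periodicPts f) (hb : b ∈ periodicPts f) :
    periodicPts (f ∘ Equiv.swap a b) = periodicPts f := by
  refine Subset.antisymm ?_ (periodicPts_subset_periodicPts_comp_swap ha hb)
  have hf : (f ∘ Equiv.swap a b) ∘ Equiv.swap a b = f := by
    ext x; simp
  conv_rhs => rw [← hf]
  exact periodicPts_subset_periodicPts_comp_swap (periodicPts_subset_periodicPts_comp_swap ha hb ha)
    (periodicPts_subset_periodicPts_comp_swap ha hb hb)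

end PeriodicPts

section Rotation

open Set

variable {α β : Type*} {g : α → β} {h : β → α} {a : α}

lemma mapsTo_periodicPts_diff_singleton (ha : IsFixedPt (h ∘ g) a) :
    MapsTo g (periodicPts (h ∘ g) \ {a}) (periodicPts (g ∘ h) \ {g a}) := by
  rintro x ⟨hx, hxa⟩
  refine ⟨Semiconj.mapsTo_periodicPts (g := g) (fun _ => rfl) hx, fun hgx => hxa ?_⟩
  have ha' : a ∈ periodicPts (h ∘ g) := ha.mem_periodicPts
  exact (bijOn_periodicPts (h ∘ g)).injOn hx ha' (congrArg h hgx)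

lemma nonempty_periodicPts_diff_comm (ha : IsFixedPt (h ∘ g) a) :
    (periodicPts (h ∘ g) \ {a}).Nonempty ↔ (periodicPts (g ∘ h) \ {g a}).Nonempty := by
  refine ⟨fun hne => hne.image g |>.mono (mapsTo_periodicPts_diff_singleton ha).image_subset,
    fun hne => ?_⟩
  have hb : IsFixedPt (g ∘ h) (g a) := congrArg g ha
  have := (mapsTo_periodicPts_diff_singleton hb).image_subset
  rw [show h (g a) = a from ha] at this
  exact (hne.image h).mono this

end Rotation

section CardFilter

open Finset

variable {A B C : Type*} [Fintype A] [Fintype B] [Fintype C]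

lemma card_filter_prod_prod {S : A × B × C → Prop} {P : A → Prop} {Q : B → Prop} {R : C → Prop}
    [DecidablePred S] [DecidablePred P] [DecidablePred Q] [DecidablePred R]
    (h : ∀ x, S x ↔ P x.1 ∧ Q x.2.1 ∧ R x.2.2) :
    #{x | S x} = #{a | P a} * #{b | Q b} * #{c | R c} := by
  rw [filter_congr fun x _ => h x, ← univ_product_univ,
    filter_product (p := P) (q := fun y : B × C => Q y.1 ∧ R y.2), card_product,
    ← univ_product_univ, filter_product, card_product, mul_assoc]

variable [DecidableEq A]

lemma card_filter_eqOn (s : Finset A) (v : A → B)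
    [DecidablePred fun f : A → B => ∀ a ∈ s, f a = v a] :
    #{f : A → B | ∀ a ∈ s, f a = v a} = Fintype.card B ^ (Fintype.card A - #s) := by
  classical
  have hpi : ({f : A → B | ∀ a ∈ s, f a = v a} : Finset (A → B)) =
      Fintype.piFinset fun a => if a ∈ s then {v a} else univ := by
    ext f
    simp only [mem_filter, mem_univ, true_and, Fintype.mem_piFinset]
    refine forall_congr' fun a => ?_
    split_ifs <;> simp [*]
  simp only [hpi, Fintype.card_piFinset, apply_ite card, card_singleton, card_univ]
  rw [prod_ite, prod_const_one, one_mul, prod_const, filter_not, card_sdiff, filter_mem_eq_inter,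
    univ_inter, inter_univ, card_univ]

lemma card_filter_apply_eq (a : A) (b : B) [DecidablePred fun f : A → B => f a = b] :
    #{f : A → B | f a = b} = Fintype.card B ^ (Fintype.card A - 1) := by
  classical
  simpa using card_filter_eqOn {a} fun _ => b

lemma card_filter_apply_eq_and_apply_eq {a a' : A} (ha : a ≠ a') (b b' : B)
    [DecidablePred fun f : A → B => f a = b ∧ f a' = b'] :
    #{f : A → B | f a = b ∧ f a' = b'} = Fintype.card B ^ (Fintype.card A - 2) := by
  classical
  convert card_filter_eqOn {a, a'} (Function.update (fun _ => b') a b) using 3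
  · simp [Function.update_apply, ha.symm]
  · rw [card_pair ha]

end CardFilter

def Avoids {X₁ X₂ X₃ : Type*} (δ c : X₁ × X₂ × X₃) : Prop :=
  δ.1 ≠ c.1 ∧ δ.2.1 ≠ c.2.1 ∧ δ.2.2 ≠ c.2.2

abbrev MapTriple (X₁ X₂ X₃ : Type*) := (X₁ → X₂) × (X₂ → X₃) × (X₃ → X₁)

namespace MapTriple

variable {X₁ X₂ X₃ : Type*} (t : MapTriple X₁ X₂ X₃) (c : X₁ × X₂ × X₃)

def loop₁ : X₁ → X₁ := t.2.2 ∘ t.2.1 ∘ t.1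

def loop₃ : X₃ → X₃ := (t.2.1 ∘ t.1) ∘ t.2.2

def IsCycle : Prop := t.1 c.1 = c.2.1 ∧ t.2.1 c.2.1 = c.2.2 ∧ t.2.2 c.2.2 = c.1

def extraPeriodicPts : Set X₃ := periodicPts t.loop₃ \ {c.2.2}

/-- Depends on `t` only through `t.extraPeriodicPts c`, which `rewire` preserves. -/
noncomputable def pivot : X₃ := @Classical.epsilon X₃ ⟨c.2.2⟩ (· ∈ t.extraPeriodicPts c)

def rewire [DecidableEq X₃] (a b : X₃) : MapTriple X₁ X₂ X₃ :=
  (t.1, t.2.1, t.2.2 ∘ Equiv.swap a b)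

variable {t c}

lemma IsCycle.isFixedPt_loop₁ (hc : t.IsCycle c) : IsFixedPt t.loop₁ c.1 := by
  simp only [IsFixedPt, loop₁, Function.comp_apply, hc.1, hc.2.1, hc.2.2]

lemma IsCycle.isFixedPt_loop₃ (hc : t.IsCycle c) : IsFixedPt t.loop₃ c.2.2 := by
  simp only [IsFixedPt, loop₃, Function.comp_apply, hc.1, hc.2.1, hc.2.2]

lemma IsCycle.eq_of_hasConstIterate [Finite X₁] {c' : X₁ × X₂ × X₃} (hc : t.IsCycle c)
    (hc' : t.IsCycle c') (ht : HasConstIterate t.loop₁) : c = c' := by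
  have hsub := (hasConstIterate_iff_periodicPts_subset hc.isFixedPt_loop₁).mp ht
  have h₁ : c.1 = c'.1 := (hsub hc'.isFixedPt_loop₁.mem_periodicPts).symm
  have h₂ : c.2.1 = c'.2.1 := by rw [← hc.1, ← hc'.1, h₁]
  have h₃ : c.2.2 = c'.2.2 := by rw [← hc.2.1, ← hc'.2.1, h₂]
  exact Prod.ext h₁ (Prod.ext h₂ h₃)

lemma exists_isCycle_of_hasConstIterate (ht : HasConstIterate t.loop₁) : ∃ c, t.IsCycle c := by
  obtain ⟨m, c₁, hm⟩ := ht
  have hfix : t.loop₁ c₁ = c₁ := by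
    calc t.loop₁ c₁ = t.loop₁^[m] (t.loop₁ c₁) := by
          rw [← iterate_succ_apply, iterate_succ_apply', hm]
      _ = c₁ := hm _
  exact ⟨(c₁, t.1 c₁, t.2.1 (t.1 c₁)), rfl, rfl, hfix⟩

lemma IsCycle.not_hasConstIterate_iff [Finite X₁] (hc : t.IsCycle c) :
    ¬ HasConstIterate t.loop₁ ↔ (t.extraPeriodicPts c).Nonempty := by
  have hcomm := nonempty_periodicPts_diff_comm (g := t.2.1 ∘ t.1) (h := t.2.2) hc.isFixedPt_loop₁
  rw [comp_apply, hc.1, hc.2.1] at hcomm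
  rwa [hasConstIterate_iff_periodicPts_subset hc.isFixedPt_loop₁, ← Set.sdiff_eq_empty,
    ← Set.not_nonempty_iff_eq_empty, not_not]

lemma IsCycle.mapsTo_extraPeriodicPts (hc : t.IsCycle c) :
    Set.MapsTo t.loop₃ (t.extraPeriodicPts c) (t.extraPeriodicPts c) := by
  have h₃₁ :=
    mapsTo_periodicPts_diff_singleton (g := t.2.2) (h := t.2.1 ∘ t.1) hc.isFixedPt_loop₃
  have h₁₃ :=
    mapsTo_periodicPts_diff_singleton (g := t.2.1 ∘ t.1) (h := t.2.2) hc.isFixedPt_loop₁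
  rw [hc.2.2] at h₃₁
  rw [comp_apply, hc.1, hc.2.1] at h₁₃
  exact h₁₃.comp h₃₁

lemma pivot_mem (h : (t.extraPeriodicPts c).Nonempty) : t.pivot c ∈ t.extraPeriodicPts c :=
  Classical.epsilon_spec h

lemma pivot_congr {t' : MapTriple X₁ X₂ X₃} (h : t.extraPeriodicPts c = t'.extraPeriodicPts c) :
    t.pivot c = t'.pivot c := by
  simp only [pivot, h]

section Rewire

variable [DecidableEq X₃] {a b : X₃}

lemma loop₃_rewire : (t.rewire a b).loop₃ = t.loop₃ ∘ Equiv.swap a b := rfl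

@[simp]
lemma rewire_rewire : (t.rewire a b).rewire a b = t := by
  ext x <;> simp [rewire]

lemma IsCycle.rewire (hc : t.IsCycle c) (ha : a ≠ c.2.2) (hb : b ≠ c.2.2) :
    (t.rewire a b).IsCycle c :=
  ⟨hc.1, hc.2.1, by
    simp [MapTriple.rewire, Equiv.swap_apply_of_ne_of_ne ha.symm hb.symm, hc.2.2]⟩

lemma extraPeriodicPts_rewire [Finite X₃] (ha : a ∈ periodicPts t.loop₃)
    (hb : b ∈ periodicPts t.loop₃) : (t.rewire a b).extraPeriodicPts c = t.extraPeriodicPts c := by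
  rw [extraPeriodicPts, loop₃_rewire, periodicPts_comp_swap ha hb, extraPeriodicPts]

end Rewire

section CutAndGlue

variable [DecidableEq X₃]

noncomputable def cutAtPivot (c : X₁ × X₂ × X₃) (t : MapTriple X₁ X₂ X₃) :
    Σ _ : X₁ × X₂ × X₃, MapTriple X₁ X₂ X₃ :=
  let m := t.pivot c
  ⟨(t.2.2 m, t.1 (t.2.2 m), t.loop₃ m), t.rewire m (t.loop₃ m)⟩

noncomputable def glueAtPivot (c : X₁ × X₂ × X₃) (p : Σ _ : X₁ × X₂ × X₃, MapTriple X₁ X₂ X₃) :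
    MapTriple X₁ X₂ X₃ :=
  p.2.rewire (p.2.pivot c) p.1.2.2

lemma cutAtPivot_spec [Finite X₁] (hc : t.IsCycle c) (ht : ¬ HasConstIterate t.loop₁) :
    Avoids (cutAtPivot c t).1 c ∧ (cutAtPivot c t).2.IsCycle c ∧
      (cutAtPivot c t).2.IsCycle (cutAtPivot c t).1 := by
  have hm := pivot_mem (hc.not_hasConstIterate_iff.mp ht)
  have hm' := hc.mapsTo_extraPeriodicPts hm
  set m := t.pivot c
  refine ⟨⟨fun (h : t.2.2 m = c.1) => hm'.2 ?_, fun (h : t.1 (t.2.2 m) = c.2.1) => hm'.2 ?_,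
    hm'.2⟩, hc.rewire hm.2 hm'.2, rfl, rfl, ?_⟩
  · show t.2.1 (t.1 (t.2.2 m)) = c.2.2
    rw [h, hc.1, hc.2.1]
  · show t.2.1 (t.1 (t.2.2 m)) = c.2.2
    rw [h, hc.2.1]
  · simp [cutAtPivot, rewire]

lemma glueAtPivot_spec [Finite X₁] [Finite X₃] {p : Σ _ : X₁ × X₂ × X₃, MapTriple X₁ X₂ X₃}
    (hp : Avoids p.1 c ∧ p.2.IsCycle c ∧ p.2.IsCycle p.1) :
    (glueAtPivot c p).IsCycle c ∧ ¬ HasConstIterate (glueAtPivot c p).loop₁ := by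
  obtain ⟨δ, t⟩ := p
  obtain ⟨hδ, hc, hcδ⟩ := hp
  have hδ₃ : δ.2.2 ∈ t.extraPeriodicPts c := ⟨hcδ.isFixedPt_loop₃.mem_periodicPts, hδ.2.2⟩
  have hm := pivot_mem ⟨_, hδ₃⟩
  have hcg := hc.rewire hm.2 hδ.2.2
  refine ⟨hcg, hcg.not_hasConstIterate_iff.mpr ?_⟩
  rw [extraPeriodicPts_rewire hm.1 hδ₃.1]
  exact ⟨_, hδ₃⟩

lemma glueAtPivot_cutAtPivot [Finite X₁] [Finite X₃] (hc : t.IsCycle c)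
    (ht : ¬ HasConstIterate t.loop₁) :
    glueAtPivot c (cutAtPivot c t) = t := by
  have hm := pivot_mem (hc.not_hasConstIterate_iff.mp ht)
  have hm' := hc.mapsTo_extraPeriodicPts hm
  have hpivot := pivot_congr (c := c) (extraPeriodicPts_rewire hm.1 hm'.1)
  simp only [glueAtPivot, cutAtPivot, hpivot, rewire_rewire]

lemma cutAtPivot_glueAtPivot [Finite X₃] {p : Σ _ : X₁ × X₂ × X₃, MapTriple X₁ X₂ X₃}
    (hp : Avoids p.1 c ∧ p.2.IsCycle c ∧ p.2.IsCycle p.1) :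
    cutAtPivot c (glueAtPivot c p) = p := by
  obtain ⟨⟨δ₁, δ₂, δ₃⟩, t⟩ := p
  obtain ⟨hδ, hc, hδ₁, hδ₂, hδ₃⟩ := hp
  dsimp only at hδ hc hδ₁ hδ₂ hδ₃
  have hfix : IsFixedPt t.loop₃ δ₃ :=
    IsCycle.isFixedPt_loop₃ (t := t) (c := (δ₁, δ₂, δ₃)) ⟨hδ₁, hδ₂, hδ₃⟩
  have hδ₃mem : δ₃ ∈ t.extraPeriodicPts c := ⟨hfix.mem_periodicPts, hδ.2.2⟩
  have hm := pivot_mem ⟨_, hδ₃mem⟩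
  have hpivot := pivot_congr (c := c) (extraPeriodicPts_rewire hm.1 hδ₃mem.1)
  set m := t.pivot c
  have hh : (t.rewire m δ₃).2.2 m = δ₁ := by simp [rewire, hδ₃]
  have hloop : (t.rewire m δ₃).loop₃ m = δ₃ := by
    rw [loop₃_rewire, comp_apply, Equiv.swap_apply_left, hfix]
  show cutAtPivot c (t.rewire m δ₃) = ⟨(δ₁, δ₂, δ₃), t⟩
  rw [cutAtPivot, hpivot, hh, hloop, rewire_rewire]
  change (⟨(δ₁, t.1 δ₁, δ₃), t⟩ : Σ _ : X₁ × X₂ × X₃, MapTriple X₁ X₂ X₃) = _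
  rw [hδ₁]

end CutAndGlue

section Counting

open Finset
open scoped Classical

variable [Fintype X₁] [Fintype X₂] [Fintype X₃] (c : X₁ × X₂ × X₃)

lemma card_isCycle_not_hasConstIterate :
    #{t : MapTriple X₁ X₂ X₃ | t.IsCycle c ∧ ¬ HasConstIterate t.loop₁} =
      ∑ δ with Avoids δ c, #{t : MapTriple X₁ X₂ X₃ | t.IsCycle c ∧ t.IsCycle δ} := by
  rw [← card_sigma]
  refine card_nbij' (cutAtPivot c) (glueAtPivot c) ?_ ?_ ?_ ?_
  · intro t ht
    simp only [coe_filter, mem_univ, true_and, Set.mem_ofPred_eq, coe_sigma,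
      Set.mem_sigma_iff] at ht ⊢
    exact cutAtPivot_spec ht.1 ht.2
  · intro p hp
    simp only [coe_filter, mem_univ, true_and, Set.mem_ofPred_eq, coe_sigma,
      Set.mem_sigma_iff] at hp ⊢
    exact glueAtPivot_spec hp
  · intro t ht
    simp only [coe_filter, mem_univ, true_and, Set.mem_ofPred_eq] at ht
    exact glueAtPivot_cutAtPivot ht.1 ht.2
  · intro p hp
    simp only [coe_sigma, coe_filter, mem_univ, true_and, Set.mem_sigma_iff,
      Set.mem_ofPred_eq] at hp
    exact cutAtPivot_glueAtPivot hp

lemma card_isCycle :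
    #{t : MapTriple X₁ X₂ X₃ | t.IsCycle c} =
      Fintype.card X₂ ^ (Fintype.card X₁ - 1) * Fintype.card X₃ ^ (Fintype.card X₂ - 1) *
        Fintype.card X₁ ^ (Fintype.card X₃ - 1) := by
  rw [card_filter_prod_prod (S := (IsCycle · c)) (P := (· c.1 = c.2.1)) (Q := (· c.2.1 = c.2.2))
    (R := (· c.2.2 = c.1)) fun _ => Iff.rfl]
  simp only [card_filter_apply_eq]

lemma card_isCycle_and_isCycle {δ : X₁ × X₂ × X₃} (hδ : Avoids δ c) :
    #{t : MapTriple X₁ X₂ X₃ | t.IsCycle c ∧ t.IsCycle δ} =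
      Fintype.card X₂ ^ (Fintype.card X₁ - 2) * Fintype.card X₃ ^ (Fintype.card X₂ - 2) *
        Fintype.card X₁ ^ (Fintype.card X₃ - 2) := by
  rw [card_filter_prod_prod (P := fun f => f c.1 = c.2.1 ∧ f δ.1 = δ.2.1)
      (Q := fun g => g c.2.1 = c.2.2 ∧ g δ.2.1 = δ.2.2)
      (R := fun h => h c.2.2 = c.1 ∧ h δ.2.2 = δ.1) fun t => by simp only [IsCycle]; tauto]
  simp only [card_filter_apply_eq_and_apply_eq (Ne.symm hδ.1),
    card_filter_apply_eq_and_apply_eq (Ne.symm hδ.2.1),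
    card_filter_apply_eq_and_apply_eq (Ne.symm hδ.2.2)]

lemma card_avoids :
    #{δ : X₁ × X₂ × X₃ | Avoids δ c} =
      (Fintype.card X₁ - 1) * (Fintype.card X₂ - 1) * (Fintype.card X₃ - 1) := by
  rw [card_filter_prod_prod (S := (Avoids · c)) (P := (· ≠ c.1)) (Q := (· ≠ c.2.1))
    (R := (· ≠ c.2.2)) fun _ => Iff.rfl]
  simp only [filter_ne', card_erase_of_mem (mem_univ _), card_univ]

lemma card_isCycle_hasConstIterate_add :
    #{t : MapTriple X₁ X₂ X₃ | t.IsCycle c ∧ HasConstIterate t.loop₁} +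
        (Fintype.card X₁ - 1) * (Fintype.card X₂ - 1) * (Fintype.card X₃ - 1) *
          (Fintype.card X₂ ^ (Fintype.card X₁ - 2) * Fintype.card X₃ ^ (Fintype.card X₂ - 2) *
            Fintype.card X₁ ^ (Fintype.card X₃ - 2)) =
      Fintype.card X₂ ^ (Fintype.card X₁ - 1) * Fintype.card X₃ ^ (Fintype.card X₂ - 1) *
        Fintype.card X₁ ^ (Fintype.card X₃ - 1) := by
  rw [← card_avoids, ← sum_const_nat fun δ hδ => card_isCycle_and_isCycle c (mem_filter.mp hδ).2,
    ← card_isCycle_not_hasConstIterate, ← card_isCycle c, ← filter_filter, ← filter_filter,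
    card_filter_add_card_filter_not]

lemma card_hasConstIterate :
    #{t : MapTriple X₁ X₂ X₃ | HasConstIterate t.loop₁} =
      ∑ c, #{t : MapTriple X₁ X₂ X₃ | t.IsCycle c ∧ HasConstIterate t.loop₁} := by
  rw [← card_biUnion]
  · congr 1
    ext t
    simp only [mem_filter, mem_univ, true_and, mem_biUnion]
    exact ⟨fun ht => (exists_isCycle_of_hasConstIterate ht).imp fun _ hc => ⟨hc, ht⟩,
      fun ⟨_, _, ht⟩ => ht⟩
  · intro c _ c' _ hne
    simp only [Function.onFun, disjoint_left, mem_filter, mem_univ, true_and]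
    exact fun t ⟨hc, ht⟩ ⟨hc', _⟩ => hne (hc.eq_of_hasConstIterate hc' ht)

lemma card_hasConstIterate_add :
    #{t : MapTriple X₁ X₂ X₃ | HasConstIterate t.loop₁} +
        Fintype.card X₁ * Fintype.card X₂ * Fintype.card X₃ *
          ((Fintype.card X₁ - 1) * (Fintype.card X₂ - 1) * (Fintype.card X₃ - 1) *
            (Fintype.card X₂ ^ (Fintype.card X₁ - 2) * Fintype.card X₃ ^ (Fintype.card X₂ - 2) *
              Fintype.card X₁ ^ (Fintype.card X₃ - 2))) =
      Fintype.card X₁ * Fintype.card X₂ * Fintype.card X₃ *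
        (Fintype.card X₂ ^ (Fintype.card X₁ - 1) * Fintype.card X₃ ^ (Fintype.card X₂ - 1) *
          Fintype.card X₁ ^ (Fintype.card X₃ - 1)) := by
  have hcard : Fintype.card X₁ * Fintype.card X₂ * Fintype.card X₃ =
      #(univ : Finset (X₁ × X₂ × X₃)) := by
    rw [card_univ, Fintype.card_prod, Fintype.card_prod, mul_assoc]
  have hsum := sum_congr rfl fun (c : X₁ × X₂ × X₃) (_ : c ∈ univ) =>
    card_isCycle_hasConstIterate_add c
  rwa [sum_add_distrib, sum_const, sum_const, smul_eq_mul, smul_eq_mul, ← card_hasConstIterate,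
    ← hcard] at hsum

end Counting

end MapTriple

lemma sub_one_mul_mul_pow_sub_two (k n : ℕ) :
    (k - 1) * (n * n ^ (k - 2)) = (k - 1) * n ^ (k - 1) := by
  obtain _ | _ | k := k
  · simp
  · simp
  · rw [show k + 2 - 1 = k + 2 - 2 + 1 by omega, pow_succ']

lemma add_sub_one_mul_sub_one_mul_sub_one {a b c : ℕ} (ha : 1 ≤ a) (hb : 1 ≤ b) (hc : 1 ≤ c) :
    a * b + b * c + c * a - (a + b + c) + 1 + (a - 1) * (b - 1) * (c - 1) = a * b * c := by
  have hle : a + b + c ≤ a * b + b * c + c * a := by nlinarith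
  zify [ha, hb, hc, hle]
  ring

lemma eq_closedForm_of_add_eq {n₁ n₂ n₃ N : ℕ} (hn₁ : 1 ≤ n₁) (hn₂ : 1 ≤ n₂) (hn₃ : 1 ≤ n₃)
    (h : N + n₁ * n₂ * n₃ * ((n₁ - 1) * (n₂ - 1) * (n₃ - 1) *
        (n₂ ^ (n₁ - 2) * n₃ ^ (n₂ - 2) * n₁ ^ (n₃ - 2))) =
      n₁ * n₂ * n₃ * (n₂ ^ (n₁ - 1) * n₃ ^ (n₂ - 1) * n₁ ^ (n₃ - 1))) :
    N = n₁ ^ (n₃ - 1) * n₂ ^ (n₁ - 1) * n₃ ^ (n₂ - 1) *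
      (n₁ * n₂ + n₂ * n₃ + n₃ * n₁ - (n₁ + n₂ + n₃) + 1) := by
  set M := n₁ ^ (n₃ - 1) * n₂ ^ (n₁ - 1) * n₃ ^ (n₂ - 1)
  set d := (n₁ - 1) * (n₂ - 1) * (n₃ - 1)
  have hd : n₁ * n₂ * n₃ * (d * (n₂ ^ (n₁ - 2) * n₃ ^ (n₂ - 2) * n₁ ^ (n₃ - 2))) = d * M := by
    calc _ = (n₁ - 1) * (n₂ * n₂ ^ (n₁ - 2)) * ((n₂ - 1) * (n₃ * n₃ ^ (n₂ - 2))) *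
          ((n₃ - 1) * (n₁ * n₁ ^ (n₃ - 2))) := by ring
      _ = (n₁ - 1) * n₂ ^ (n₁ - 1) * ((n₂ - 1) * n₃ ^ (n₂ - 1)) * ((n₃ - 1) * n₁ ^ (n₃ - 1)) := by
        rw [sub_one_mul_mul_pow_sub_two, sub_one_mul_mul_pow_sub_two, sub_one_mul_mul_pow_sub_two]
      _ = d * M := by ring
  rw [hd, ← add_sub_one_mul_sub_one_mul_sub_one hn₁ hn₂ hn₃] at h
  apply Nat.add_right_cancel (m := d * M)
  rw [h]
  ring

/-- For pairwise disjoint finite sets `X₁, X₂, X₃` of cardinalities `n₁, n₂, n₃ ≥ 1`,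
the number of eventually constant triples `(f, g, h)` (with `f : X₁ → X₂`,
`g : X₂ → X₃`, `h : X₃ → X₁` such that some iterate `(h ∘ g ∘ f)^[m]` is a constant
map) equals `n₁^(n₃−1) · n₂^(n₁−1) · n₃^(n₂−1) · (n₁n₂ + n₂n₃ + n₃n₁ − (n₁+n₂+n₃) + 1)`. -/
theorem stmt19 (X₁ X₂ X₃ : Type*) [Fintype X₁] [Fintype X₂] [Fintype X₃]
    (n₁ n₂ n₃ : ℕ) (h₁ : Fintype.card X₁ = n₁) (h₂ : Fintype.card X₂ = n₂)
    (h₃ : Fintype.card X₃ = n₃) (hn₁ : 1 ≤ n₁) (hn₂ : 1 ≤ n₂) (hn₃ : 1 ≤ n₃) :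
    Nat.card {t : (X₁ → X₂) × (X₂ → X₃) × (X₃ → X₁) //
        ∃ (m : ℕ) (c : X₁), ∀ x : X₁, (t.2.2 ∘ t.2.1 ∘ t.1)^[m] x = c} =
      n₁ ^ (n₃ - 1) * n₂ ^ (n₁ - 1) * n₃ ^ (n₂ - 1) *
        (n₁ * n₂ + n₂ * n₃ + n₃ * n₁ - (n₁ + n₂ + n₃) + 1) := by
  classical
  subst h₁ h₂ h₃
  rw [Nat.card_eq_fintype_card, Fintype.card_subtype]
  exact eq_closedForm_of_add_eq hn₁ hn₂ hn₃ MapTriple.card_hasConstIterate_add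
end
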